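/- arXiv:1807.08591 — 7 statements merged into one kernel-verified Lean document; each statement's English description precedes it below -/
import Mathlib

section
/- Let A ∈ ℂ^{n×n} be a Hermitian matrix having exactly k positive eigenvalues (counted with multiplicities), and let K ∈ ℂ^{n×m}. Then for every j with 1 ≤ j ≤ min{k, m, rank(K*AK)}, the j-th largest eigenvalue of the Hermitian matrix K*AK satisfies λ_j^↓(K*AK) ≤ ‖K‖² · λ_j^↓(A), where λ_j^↓(X) denotes the j-th eigenvalue of a Hermitian matrix X (counted with multiplicities) arranged in nonincreasing order and ‖K‖ is the spectral (operator) norm of K. -/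
/-!
Diagonalize `A = U Λ Uᴴ` and `KᴴAK = V N Vᴴ`, and put `M = Uᴴ K V`, so that `Mᴴ Λ M = N` and
`‖M‖ = ‖K‖`. A dimension count gives a nonzero `y` supported on the first `j + 1` coordinates
whose image `M y` vanishes on the first `j` coordinates. Comparing the two diagonal quadratic
forms at `y` gives `ν_j ‖y‖² ≤ yᴴ N y = (My)ᴴ Λ (My) ≤ λ_j ‖My‖² ≤ λ_j ‖K‖² ‖y‖²`, where the last
step needs `λ_j > 0`, i.e. `j < k`.
-/

open scoped Matrix

/-- The spectral (operator) norm of a complex rectangular matrix. -/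
noncomputable def specNorm {n m : ℕ} (K : Matrix (Fin n) (Fin m) ℂ) : ℝ :=
  ‖LinearMap.toContinuousLinearMap (Matrix.toEuclideanLin K)‖

open Matrix
open scoped Matrix.Norms.L2Operator

theorem specNorm_eq_l2_opNorm {n m : ℕ} (K : Matrix (Fin n) (Fin m) ℂ) : specNorm K = ‖K‖ := rfl

theorem l2_opNorm_conjTranspose_mul_mul_of_mem_unitaryGroup {m n : Type*} [Fintype m] [Fintype n]
    [DecidableEq m] [DecidableEq n] {U : Matrix m m ℂ} {V : Matrix n n ℂ}
    (hU : U ∈ unitaryGroup m ℂ) (hV : V ∈ unitaryGroup n ℂ) (K : Matrix m n ℂ) :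
    ‖Uᴴ * K * V‖ = ‖K‖ := by
  have hUU : U * Uᴴ = 1 := hU.2
  have hsq : ‖(Uᴴ * K * V)ᴴ * (Uᴴ * K * V)‖ = ‖Kᴴ * K‖ := by
    have : (Uᴴ * K * V)ᴴ * (Uᴴ * K * V) = star V * (Kᴴ * K) * V := by
      simp only [conjTranspose_mul, conjTranspose_conjTranspose, star_eq_conjTranspose,
        Matrix.mul_assoc]
      rw [← Matrix.mul_assoc U, hUU, Matrix.one_mul]
    rw [this, CStarRing.norm_mul_mem_unitary _ hV,
      CStarRing.norm_mem_unitary_mul _ (Unitary.star_mem hV)]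
  rw [l2_opNorm_conjTranspose_mul_self, l2_opNorm_conjTranspose_mul_self] at hsq
  exact mul_self_inj (norm_nonneg _) (norm_nonneg _) |>.mp hsq

theorem sum_norm_sq_mulVec_le_l2_opNorm_sq {m n : Type*} [Fintype m] [Fintype n] [DecidableEq n]
    (A : Matrix m n ℂ) (v : n → ℂ) : ∑ i, ‖(A *ᵥ v) i‖ ^ 2 ≤ ‖A‖ ^ 2 * ∑ i, ‖v i‖ ^ 2 := by
  have h : ‖WithLp.toLp 2 (A *ᵥ v)‖ ≤ ‖A‖ * ‖WithLp.toLp 2 v‖ :=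
    A.l2_opNorm_mulVec (WithLp.toLp 2 v)
  simpa only [EuclideanSpace.norm_sq_eq, mul_pow] using pow_le_pow_left₀ (norm_nonneg _) h 2

theorem star_dotProduct_diagonal_mulVec {ι : Type*} [Fintype ι] [DecidableEq ι] (c : ι → ℝ)
    (v : ι → ℂ) :
    star v ⬝ᵥ diagonal (fun i => (c i : ℂ)) *ᵥ v = ((∑ i, c i * ‖v i‖ ^ 2 : ℝ) : ℂ) := by
  push_cast
  refine Finset.sum_congr rfl fun i _ => ?_
  rw [mulVec_diagonal, Pi.star_apply, RCLike.star_def, mul_left_comm, Complex.conj_mul']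

theorem sum_mul_norm_sq_eq_of_conjTranspose_mul_diagonal_mul {m n : Type*} [Fintype m]
    [Fintype n] [DecidableEq m] [DecidableEq n] {M : Matrix m n ℂ} {c : m → ℝ} {d : n → ℝ}
    (hM : Mᴴ * diagonal (fun i => (c i : ℂ)) * M = diagonal (fun i => (d i : ℂ))) (y : n → ℂ) :
    ∑ i, d i * ‖y i‖ ^ 2 = ∑ i, c i * ‖(M *ᵥ y) i‖ ^ 2 := by
  have h : star y ⬝ᵥ (Mᴴ * diagonal (fun i => (c i : ℂ)) * M) *ᵥ y
      = star (M *ᵥ y) ⬝ᵥ diagonal (fun i => (c i : ℂ)) *ᵥ (M *ᵥ y) := by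
    rw [star_mulVec, ← dotProduct_mulVec, mulVec_mulVec, mulVec_mulVec]
  rw [hM, star_dotProduct_diagonal_mulVec, star_dotProduct_diagonal_mulVec] at h
  exact_mod_cast h

theorem conjTranspose_mul_mul_eq_of_mem_unitaryGroup {m n : Type*} [Fintype m] [Fintype n]
    [DecidableEq n] {U D : Matrix m m ℂ} {V E : Matrix n n ℂ} {K : Matrix m n ℂ}
    (hV : V ∈ unitaryGroup n ℂ) (h : Kᴴ * (U * D * Uᴴ) * K = V * E * Vᴴ) :
    (Uᴴ * K * V)ᴴ * D * (Uᴴ * K * V) = E := by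
  have hVV : Vᴴ * V = 1 := hV.1
  calc (Uᴴ * K * V)ᴴ * D * (Uᴴ * K * V) = Vᴴ * (Kᴴ * (U * D * Uᴴ) * K) * V := by
        simp only [conjTranspose_mul, conjTranspose_conjTranspose, Matrix.mul_assoc]
    _ = E := by
        rw [h]
        simp only [← Matrix.mul_assoc, hVV, Matrix.one_mul]
        rw [Matrix.mul_assoc, hVV, Matrix.mul_one]

section AntitoneWeights

variable {ι E : Type*} [Fintype ι] [LinearOrder ι] [SeminormedAddCommGroup E] {c : ι → ℝ}

theorem mul_sum_norm_sq_le_sum_mul_norm_sq (hc : Antitone c) {j : ι} {y : ι → E}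
    (hy : ∀ i, j < i → y i = 0) : c j * ∑ i, ‖y i‖ ^ 2 ≤ ∑ i, c i * ‖y i‖ ^ 2 := by
  rw [Finset.mul_sum]
  refine Finset.sum_le_sum fun i _ => ?_
  rcases le_or_gt i j with hij | hji
  · exact mul_le_mul_of_nonneg_right (hc hij) (by positivity)
  · simp [hy i hji]

theorem sum_mul_norm_sq_le_mul_sum_norm_sq (hc : Antitone c) {j : ι} {w : ι → E}
    (hw : ∀ i, i < j → w i = 0) : ∑ i, c i * ‖w i‖ ^ 2 ≤ c j * ∑ i, ‖w i‖ ^ 2 := by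
  rw [Finset.mul_sum]
  refine Finset.sum_le_sum fun i _ => ?_
  rcases lt_or_ge i j with hij | hji
  · simp [hw i hij]
  · exact mul_le_mul_of_nonneg_right (hc hji) (by positivity)

end AntitoneWeights

theorem exists_ne_zero_support_le_mulVec_eq_zero_of_lt {K : Type*} [Field K] {n m j : ℕ}
    (M : Matrix (Fin n) (Fin m) K) (hjn : j ≤ n) (hjm : j < m) :
    ∃ y : Fin m → K, y ≠ 0 ∧ (∀ i : Fin m, j < (i : ℕ) → y i = 0) ∧
      ∀ i : Fin n, (i : ℕ) < j → (M *ᵥ y) i = 0 := by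
  let extend := Function.ExtendByZero.linearMap K (Fin.castLE (Nat.succ_le_of_lt hjm))
  let f := LinearMap.funLeft K K (Fin.castLE hjn) ∘ₗ M.mulVecLin ∘ₗ extend
  obtain ⟨z, hz, hz0⟩ := Submodule.exists_mem_ne_zero_of_ne_bot <|
    LinearMap.ker_ne_bot_of_finrank_lt (f := f) (by simp)
  refine ⟨extend z, fun h => hz0 ?_, fun i hi => ?_, fun i hi => congrFun hz ⟨i, hi⟩⟩
  · exact Function.extend_injective (Fin.castLE_injective _) 0 (h.trans extend.map_zero.symm)
  · refine Function.extend_apply' _ _ _ ?_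
    rintro ⟨a, rfl⟩
    exact absurd a.isLt (by simpa using hi)

theorem schur_eigenvalue_bound_general
    (n m k : ℕ) (hkn : k ≤ n)
    (A : Matrix (Fin n) (Fin n) ℂ)
    (lam : ℕ → ℝ)
    (hlam : ∀ i j : ℕ, i ≤ j → j < n → lam j ≤ lam i)
    (hAdiag : ∃ U ∈ Matrix.unitaryGroup (Fin n) ℂ,
      A = U * Matrix.diagonal (fun i : Fin n => (lam i : ℂ)) * Uᴴ)
    (hexact : ∀ i : ℕ, i < n → (0 < lam i ↔ i < k))
    (K : Matrix (Fin n) (Fin m) ℂ)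
    (nu : ℕ → ℝ)
    (hnu : ∀ i j : ℕ, i ≤ j → j < m → nu j ≤ nu i)
    (hnudiag : ∃ V ∈ Matrix.unitaryGroup (Fin m) ℂ,
      Kᴴ * A * K = V * Matrix.diagonal (fun i : Fin m => (nu i : ℂ)) * Vᴴ)
    (j : ℕ) (hjk : j < k) (hjm : j < m) :
    nu j ≤ specNorm K ^ 2 * lam j := by
  obtain ⟨U, hU, rfl⟩ := hAdiag
  obtain ⟨V, hV, hKAK⟩ := hnudiag
  have hjn : j < n := hjk.trans_le hkn
  set M := Uᴴ * K * V
  have hM := conjTranspose_mul_mul_eq_of_mem_unitaryGroup hV hKAK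
  obtain ⟨y, hy0, hy, hMy⟩ := exists_ne_zero_support_le_mulVec_eq_zero_of_lt M hjn.le hjm
  have hS : 0 < ∑ i, ‖y i‖ ^ 2 := by
    rw [← EuclideanSpace.norm_sq_eq (WithLp.toLp 2 y)]
    exact pow_pos (norm_pos_iff.2 (by simpa using hy0)) 2
  have hlam_anti : Antitone fun i : Fin n => lam i := fun a b hab => hlam a b hab b.isLt
  have hnu_anti : Antitone fun i : Fin m => nu i := fun a b hab => hnu a b hab b.isLt
  refine le_of_mul_le_mul_right ?_ hS
  calc nu j * ∑ i, ‖y i‖ ^ 2 ≤ ∑ i : Fin m, nu i * ‖y i‖ ^ 2 :=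
        mul_sum_norm_sq_le_sum_mul_norm_sq hnu_anti (j := ⟨j, hjm⟩) hy
    _ = ∑ i : Fin n, lam i * ‖(M *ᵥ y) i‖ ^ 2 :=
        sum_mul_norm_sq_eq_of_conjTranspose_mul_diagonal_mul hM y
    _ ≤ lam j * ∑ i, ‖(M *ᵥ y) i‖ ^ 2 :=
        sum_mul_norm_sq_le_mul_sum_norm_sq hlam_anti (j := ⟨j, hjn⟩) hMy
    _ ≤ lam j * (‖M‖ ^ 2 * ∑ i, ‖y i‖ ^ 2) := by
        gcongr
        · exact ((hexact j hjn).2 hjk).le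
        · exact sum_norm_sq_mulVec_le_l2_opNorm_sq M y
    _ = specNorm K ^ 2 * lam j * ∑ i, ‖y i‖ ^ 2 := by
        rw [l2_opNorm_conjTranspose_mul_mul_of_mem_unitaryGroup hU hV, specNorm_eq_l2_opNorm]
        ring

/-- Let `A ∈ ℂ^{n×n}` be Hermitian with exactly `k` positive eigenvalues (counted with
multiplicities), listed in nonincreasing order as `lam 0 ≥ lam 1 ≥ …`, and let
`K ∈ ℂ^{n×m}`.  If `nu` lists the eigenvalues of the Hermitian matrix `KᴴAK` in
nonincreasing order, then for every `j < min {k, m, rank (KᴴAK)}` (0-indexed) one has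
`nu j ≤ ‖K‖² · lam j`. -/
theorem schur_eigenvalue_bound
    (n m k : ℕ) (hkn : k ≤ n)
    (A : Matrix (Fin n) (Fin n) ℂ)
    (lam : ℕ → ℝ)
    (hlam : ∀ i j : ℕ, i ≤ j → j < n → lam j ≤ lam i)
    (hAdiag : ∃ U ∈ Matrix.unitaryGroup (Fin n) ℂ,
      A = U * Matrix.diagonal (fun i : Fin n => (lam i : ℂ)) * Uᴴ)
    (hexact : ∀ i : ℕ, i < n → (0 < lam i ↔ i < k))
    (K : Matrix (Fin n) (Fin m) ℂ)
    (nu : ℕ → ℝ)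
    (hnu : ∀ i j : ℕ, i ≤ j → j < m → nu j ≤ nu i)
    (hnudiag : ∃ V ∈ Matrix.unitaryGroup (Fin m) ℂ,
      Kᴴ * A * K = V * Matrix.diagonal (fun i : Fin m => (nu i : ℂ)) * Vᴴ)
    (j : ℕ) (hjk : j < k) (hjm : j < m) (hjr : j < (Kᴴ * A * K).rank) :
    nu j ≤ specNorm K ^ 2 * lam j :=
  schur_eigenvalue_bound_general n m k hkn A lam hlam hAdiag hexact K nu hnu hnudiag j hjk hjm
end

section
/- Let A ∈ ℂ^{n×n} be a Hermitian matrix with eigenvalues (counted with multiplicities) λ_1 ≥ … ≥ λ_k > 0 ≥ λ_{k+1} ≥ … ≥ λ_n, and let D ∈ ℂ^{m×m} be a Hermitian matrix with eigenvalues (counted with multiplicities) μ_1 ≤ … ≤ μ_r ≤ 0 < μ_{r+1} ≤ … ≤ μ_m. If r > k, then there exists no matrix K ∈ ℂ^{n×m} such that D + K*AK is positive definite. -/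
/-!
Conjugating by the unitary that diagonalises `D` turns `D + KᴴAK` into `diag μ + Mᴴ diag λ M`
with `M = UᴴKV`. A nonzero vector `y` supported where `μ ≤ 0` with `M y` vanishing where `λ > 0`
exists because it solves at most `k` linear equations in `r > k` unknowns, and both quadratic
forms are `≤ 0` at `y`.
-/

open scoped Matrix ComplexOrder

namespace Matrix

variable {ι κ : Type*} [Fintype ι]

theorem exists_ne_zero_mulVec_eq_zero_on_of_card_lt {K : Type*} [Field K] [Finite κ]
    (B : Matrix κ ι K) {s : Set ι} {t : Set κ} (h : Nat.card t < Nat.card s) :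
    ∃ y ≠ 0, (∀ j ∉ s, y j = 0) ∧ ∀ i ∈ t, (B *ᵥ y) i = 0 := by
  classical
  have := Fintype.ofFinite t
  let f := LinearMap.funLeft K K ((↑) : t → κ) ∘ₗ B.mulVecLin ∘ₗ
    Function.ExtendByZero.linearMap K ((↑) : s → ι)
  have hker : LinearMap.ker f ≠ ⊥ :=
    LinearMap.ker_ne_bot_of_finrank_lt <| by
      simpa only [Module.finrank_pi, ← Nat.card_eq_fintype_card] using h
  obtain ⟨c, hc, hc0⟩ := (Submodule.ne_bot_iff _).mp hker
  have hext : ∀ j : s, Function.extend ((↑) : s → ι) c 0 j = c j :=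
    Subtype.val_injective.extend_apply c 0
  refine ⟨Function.extend (↑) c 0, fun hy => hc0 <| funext fun j => by rw [← hext, hy]; rfl,
    ?_, ?_⟩
  · intro j hj
    exact Function.extend_apply' _ _ _ fun ⟨a, ha⟩ => hj (ha ▸ a.2)
  · intro i hi
    exact congrFun (LinearMap.mem_ker.mp hc) ⟨i, hi⟩

theorem star_dotProduct_diagonal_mulVec_nonpos {R : Type*} [CommRing R] [PartialOrder R]
    [StarRing R] [StarOrderedRing R] [IsOrderedRing R] [DecidableEq ι] {d : ι → R} {y : ι → R}
    (h : ∀ i, y i ≠ 0 → d i ≤ 0) : star y ⬝ᵥ (diagonal d *ᵥ y) ≤ 0 := by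
  refine Finset.sum_nonpos fun i _ => ?_
  by_cases hy : y i = 0
  · simp [hy]
  · rw [Pi.star_apply, mulVec_diagonal, mul_left_comm]
    exact mul_nonpos_of_nonpos_of_nonneg (h i hy) (star_mul_self_nonneg _)

/-- The sign condition on `e` is `¬ e i ≤ 0` rather than `0 < e i` since the order on `ℂ` is
only partial. -/
theorem not_posDef_diagonal_add_conjTranspose_mul_diagonal_mul {F : Type*} [Field F]
    [PartialOrder F] [StarRing F] [StarOrderedRing F] [IsOrderedRing F] [DecidableEq ι]
    [Fintype κ] [DecidableEq κ] (d : ι → F) (e : κ → F) (M : Matrix κ ι F)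
    (h : Nat.card {i | ¬ e i ≤ 0} < Nat.card {j | d j ≤ 0}) :
    ¬ (diagonal d + Mᴴ * diagonal e * M).PosDef := by
  intro hpd
  obtain ⟨y, hy0, hys, hyt⟩ := M.exists_ne_zero_mulVec_eq_zero_on_of_card_lt h
  have hd : star y ⬝ᵥ (diagonal d *ᵥ y) ≤ 0 :=
    star_dotProduct_diagonal_mulVec_nonpos fun j hj => not_not.mp fun hn => hj (hys j hn)
  have he : star (M *ᵥ y) ⬝ᵥ (diagonal e *ᵥ (M *ᵥ y)) ≤ 0 :=
    star_dotProduct_diagonal_mulVec_nonpos fun i hi => not_not.mp fun hn => hi (hyt i hn)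
  have hpos := hpd.dotProduct_mulVec_pos hy0
  rw [add_mulVec, dotProduct_add, ← mulVec_mulVec, ← mulVec_mulVec, dotProduct_mulVec _ Mᴴ,
    ← star_mulVec] at hpos
  exact (add_nonpos hd he).not_gt hpos

end Matrix

theorem no_posdef_completion_of_r_gt_k_general
    (n m k r : ℕ) (hrm : r ≤ m)
    (A : Matrix (Fin n) (Fin n) ℂ) (D : Matrix (Fin m) (Fin m) ℂ)
    (lam mu : ℕ → ℝ)
    (hlamnonpos : ∀ i : ℕ, k ≤ i → i < n → lam i ≤ 0)
    (hmunonpos : ∀ i : ℕ, i < r → mu i ≤ 0)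
    (hAdiag : ∃ U ∈ Matrix.unitaryGroup (Fin n) ℂ,
      A = U * Matrix.diagonal (fun i : Fin n => (lam i : ℂ)) * Uᴴ)
    (hDdiag : ∃ V ∈ Matrix.unitaryGroup (Fin m) ℂ,
      D = V * Matrix.diagonal (fun j : Fin m => (mu j : ℂ)) * Vᴴ)
    (hrk : k < r) :
    ¬ ∃ K : Matrix (Fin n) (Fin m) ℂ, (D + Kᴴ * A * K).PosDef := by
  obtain ⟨U, -, rfl⟩ := hAdiag
  obtain ⟨V, hV, rfl⟩ := hDdiag
  set Λ := Matrix.diagonal (fun i : Fin n => (lam i : ℂ))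
  set Δ := Matrix.diagonal (fun j : Fin m => (mu j : ℂ))
  rintro ⟨K, hpd⟩
  have hVV : Vᴴ * V = 1 := Matrix.mem_unitaryGroup_iff'.mp hV
  have hconj : Vᴴ * (V * Δ * Vᴴ + Kᴴ * (U * Λ * Uᴴ) * K) * V =
      Δ + (Uᴴ * K * V)ᴴ * Λ * (Uᴴ * K * V) := by
    simp only [Matrix.mul_add, Matrix.add_mul, Matrix.conjTranspose_mul,
      Matrix.conjTranspose_conjTranspose, ← Matrix.mul_assoc, hVV, Matrix.one_mul]
    simp only [Matrix.mul_assoc, hVV, Matrix.mul_one]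
  have hpos_card : Nat.card {i : Fin n | ¬ (lam i : ℂ) ≤ 0} ≤ k := by
    rw [← Nat.card_fin k]
    refine Nat.card_le_card_of_injective (fun i => ⟨i.1, ?_⟩) fun i j hij => ?_
    · exact lt_of_not_ge fun hki => i.2 (by exact_mod_cast hlamnonpos i.1 hki i.1.2)
    · exact Subtype.ext (Fin.ext (Fin.mk.inj hij))
  have hnonpos_card : r ≤ Nat.card {j : Fin m | (mu j : ℂ) ≤ 0} := by
    rw [← Nat.card_fin r]
    refine Nat.card_le_card_of_injective (fun j => ⟨Fin.castLE hrm j, ?_⟩) fun i j hij => ?_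
    · exact_mod_cast hmunonpos j j.2
    · exact Fin.castLE_injective hrm (congrArg Subtype.val hij)
  refine Matrix.not_posDef_diagonal_add_conjTranspose_mul_diagonal_mul _ _ (Uᴴ * K * V)
    (hpos_card.trans_lt (hrk.trans_le hnonpos_card)) ?_
  rw [← hconj]
  exact hpd.conjTranspose_mul_mul_same
    (Matrix.mulVec_injective_of_isUnit (Unitary.isUnit_coe (U := ⟨V, hV⟩)))

/-- Let `A ∈ ℂ^{n×n}` be Hermitian with eigenvalues (counted with multiplicities,
nonincreasing) `lam 0 ≥ … ≥ lam (k-1) > 0 ≥ lam k ≥ … ≥ lam (n-1)`, and let `D ∈ ℂ^{m×m}`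
be Hermitian with eigenvalues (nondecreasing) `mu 0 ≤ … ≤ mu (r-1) ≤ 0 < mu r ≤ … ≤ mu (m-1)`.
If `r > k`, then there is no `K ∈ ℂ^{n×m}` such that `D + KᴴAK` is positive definite. -/
theorem no_posdef_completion_of_r_gt_k
    (n m k r : ℕ) (hkn : k ≤ n) (hrm : r ≤ m)
    (A : Matrix (Fin n) (Fin n) ℂ) (D : Matrix (Fin m) (Fin m) ℂ)
    (lam mu : ℕ → ℝ)
    (hlam : ∀ i j : ℕ, i ≤ j → j < n → lam j ≤ lam i)
    (hlampos : ∀ i : ℕ, i < k → 0 < lam i)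
    (hlamnonpos : ∀ i : ℕ, k ≤ i → i < n → lam i ≤ 0)
    (hmu : ∀ i j : ℕ, i ≤ j → j < m → mu i ≤ mu j)
    (hmunonpos : ∀ i : ℕ, i < r → mu i ≤ 0)
    (hmupos : ∀ i : ℕ, r ≤ i → i < m → 0 < mu i)
    (hAdiag : ∃ U ∈ Matrix.unitaryGroup (Fin n) ℂ,
      A = U * Matrix.diagonal (fun i : Fin n => (lam i : ℂ)) * Uᴴ)
    (hDdiag : ∃ V ∈ Matrix.unitaryGroup (Fin m) ℂ,
      D = V * Matrix.diagonal (fun j : Fin m => (mu j : ℂ)) * Vᴴ)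
    (hrk : k < r) :
    ¬ ∃ K : Matrix (Fin n) (Fin m) ℂ, (D + Kᴴ * A * K).PosDef :=
  no_posdef_completion_of_r_gt_k_general n m k r hrm A D lam mu hlamnonpos hmunonpos hAdiag hDdiag
    hrk
end

section
/- Let A ∈ ℂ^{n×n} be a Hermitian matrix with eigenvalues (counted with multiplicities) λ_1 ≥ … ≥ λ_k > 0 ≥ λ_{k+1} ≥ … ≥ λ_n, and let D ∈ ℂ^{m×m} be a Hermitian matrix with eigenvalues (counted with multiplicities) μ_1 ≤ … ≤ μ_r ≤ 0 < μ_{r+1} ≤ … ≤ μ_m, and let p = dim ker D. If r − p > k, then there exists no matrix K ∈ ℂ^{n×m} such that D + K*AK is positive semidefinite. -/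
/-!
Replacing `K` by `Uᴴ K V` and conjugating by `V` reduces to diagonal `A` and `D`. At most `k`
coordinates carry a positive entry of `A`, and at least `r - p` coordinates a negative entry of
`D` (the `r` nonpositive ones minus the `p` zeros). As `k < r - p`, dimension counting gives a
nonzero `x` supported on the negative coordinates of `D` with `Kx` vanishing on the positive
coordinates of `A`; then `x* D x < 0` and `(Kx)* A (Kx) ≤ 0`.
-/

open scoped Matrix ComplexOrder
open Matrix Finset Module

variable {m n : Type*} [Fintype m] [DecidableEq m]

theorem Matrix.exists_ne_zero_supported_mulVec_eq_zero_on {𝕜 : Type*} [Field 𝕜]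
    (K : Matrix n m 𝕜) {S : Finset m} {T : Finset n} (hTS : #T < #S) :
    ∃ x : m → 𝕜, x ≠ 0 ∧ (∀ j ∉ S, x j = 0) ∧ ∀ i ∈ T, (K *ᵥ x) i = 0 := by
  let L : (m → 𝕜) →ₗ[𝕜] (T → 𝕜) × (↥(Sᶜ) → 𝕜) :=
    (LinearMap.funLeft 𝕜 𝕜 Subtype.val ∘ₗ K.mulVecLin).prod (LinearMap.funLeft 𝕜 𝕜 Subtype.val)
  have hdim : finrank 𝕜 ((T → 𝕜) × (↥(Sᶜ) → 𝕜)) < finrank 𝕜 (m → 𝕜) := by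
    simp only [finrank_prod, finrank_fintype_fun_eq_card, Fintype.card_coe, card_compl]
    have := S.card_le_univ
    omega
  obtain ⟨x, hxL, hx0⟩ :=
    (Submodule.ne_bot_iff _).mp (LinearMap.ker_ne_bot_of_finrank_lt (f := L) hdim)
  obtain ⟨hxT, hxS⟩ := Prod.ext_iff.mp (LinearMap.mem_ker.mp hxL)
  refine ⟨x, hx0, fun j hj => ?_, fun i hi => ?_⟩
  · simpa [L] using congrFun hxS ⟨j, mem_compl.mpr hj⟩
  · simpa [L] using congrFun hxT ⟨i, hi⟩

theorem Matrix.finrank_ker_mulVecLin_unitary_mul_diagonal_mul {𝕜 : Type*} [Field 𝕜] [StarRing 𝕜]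
    [DecidableEq 𝕜] {V : Matrix m m 𝕜} (hV : V ∈ unitaryGroup m 𝕜) (d : m → 𝕜) :
    finrank 𝕜 (LinearMap.ker (V * diagonal d * Vᴴ).mulVecLin) = #{j | d j = 0} := by
  have hrank : (V * diagonal d * Vᴴ).rank = #{j | d j ≠ 0} := by
    have hVH : IsUnit Vᴴ.det := UnitaryGroup.det_isUnit ⟨star V, Unitary.star_mem hV⟩
    rw [Matrix.mul_assoc, rank_mul_eq_right_of_isUnit_det _ _ (UnitaryGroup.det_isUnit ⟨V, hV⟩),
      rank_mul_eq_left_of_isUnit_det _ _ hVH, rank_diagonal, Fintype.card_subtype]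
  have hnullity := (V * diagonal d * Vᴴ).mulVecLin.finrank_range_add_finrank_ker
  change (V * diagonal d * Vᴴ).rank + _ = finrank 𝕜 (m → 𝕜) at hnullity
  have hsplit := card_filter_add_card_filter_not (s := univ) (fun j => d j = 0)
  rw [hrank, finrank_fintype_fun_eq_card, ← card_univ] at hnullity
  simp only [ne_eq] at hnullity
  omega

theorem star_dotProduct_diagonal_ofReal_mulVec (d : m → ℝ) (v : m → ℂ) :
    star v ⬝ᵥ (diagonal (fun i => (d i : ℂ)) *ᵥ v)
      = ((∑ i, d i * Complex.normSq (v i) : ℝ) : ℂ) := by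
  push_cast
  refine sum_congr rfl fun i _ => ?_
  simp [mulVec_diagonal, Complex.normSq_eq_conj_mul_self]
  ring

variable [Fintype n] [DecidableEq n]

theorem Matrix.not_posSemidef_diagonal_add_conjTranspose_mul_diagonal_mul (d : m → ℝ)
    (l : n → ℝ) (K : Matrix n m ℂ) (hcard : #{i | 0 < l i} < #{j | d j < 0}) :
    ¬ (diagonal (fun j => (d j : ℂ)) + Kᴴ * diagonal (fun i => (l i : ℂ)) * K).PosSemidef := by
  intro hpsd
  obtain ⟨x, hx0, hxS, hyT⟩ := K.exists_ne_zero_supported_mulVec_eq_zero_on hcard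
  have hform :
      star x ⬝ᵥ ((diagonal (fun j => (d j : ℂ)) + Kᴴ * diagonal (fun i => (l i : ℂ)) * K) *ᵥ x)
        = ((∑ j, d j * Complex.normSq (x j) + ∑ i, l i * Complex.normSq ((K *ᵥ x) i) : ℝ) : ℂ) := by
    have hconj : star x ⬝ᵥ ((Kᴴ * diagonal (fun i => (l i : ℂ)) * K) *ᵥ x)
        = star (K *ᵥ x) ⬝ᵥ (diagonal (fun i => (l i : ℂ)) *ᵥ (K *ᵥ x)) := by
      rw [Matrix.mul_assoc, ← mulVec_mulVec, dotProduct_mulVec, ← star_mulVec, mulVec_mulVec]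
    rw [add_mulVec, dotProduct_add, hconj, star_dotProduct_diagonal_ofReal_mulVec,
      star_dotProduct_diagonal_ofReal_mulVec, Complex.ofReal_add]
  have hneg : ∑ j, d j * Complex.normSq (x j) < 0 := by
    obtain ⟨j₀, hj₀⟩ := Function.ne_iff.mp hx0
    have hdj₀ : d j₀ < 0 := by simpa using not_imp_comm.mp (hxS j₀) hj₀
    refine sum_neg' (fun j _ => ?_)
      ⟨j₀, mem_univ _, mul_neg_of_neg_of_pos hdj₀ (Complex.normSq_pos.mpr hj₀)⟩
    by_cases hj : d j < 0
    · exact mul_nonpos_of_nonpos_of_nonneg hj.le (Complex.normSq_nonneg _)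
    · simp [hxS j (by simpa using hj)]
  have hnonpos : ∑ i, l i * Complex.normSq ((K *ᵥ x) i) ≤ 0 := by
    refine sum_nonpos fun i _ => ?_
    by_cases hi : 0 < l i
    · simp [hyT i (by simpa using hi)]
    · exact mul_nonpos_of_nonpos_of_nonneg (not_lt.mp hi) (Complex.normSq_nonneg _)
  have hquad := hpsd.dotProduct_mulVec_nonneg x
  rw [hform, Complex.zero_le_real] at hquad
  linarith

theorem Matrix.not_posSemidef_unitary_conj_diagonal_add {U : Matrix n n ℂ} {V : Matrix m m ℂ}
    (hV : V ∈ unitaryGroup m ℂ) (d : m → ℝ) (l : n → ℝ) (K : Matrix n m ℂ)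
    (hcard : #{i | 0 < l i} < #{j | d j < 0}) :
    ¬ (V * diagonal (fun j => (d j : ℂ)) * Vᴴ
        + Kᴴ * (U * diagonal (fun i => (l i : ℂ)) * Uᴴ) * K).PosSemidef := by
  intro hpsd
  have hVV : Vᴴ * V = 1 := Unitary.star_mul_self_of_mem hV
  refine not_posSemidef_diagonal_add_conjTranspose_mul_diagonal_mul d l (Uᴴ * K * V) hcard ?_
  convert hpsd.conjTranspose_mul_mul_same V using 1
  simp only [conjTranspose_mul, conjTranspose_conjTranspose, Matrix.mul_add, Matrix.add_mul,
    Matrix.mul_assoc]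
  rw [← Matrix.mul_assoc Vᴴ V, hVV, Matrix.one_mul, Matrix.mul_one]

theorem no_possemidef_completion_of_r_sub_p_gt_k_general
    (n m k r p : ℕ) (hrm : r ≤ m)
    (A : Matrix (Fin n) (Fin n) ℂ) (D : Matrix (Fin m) (Fin m) ℂ)
    (lam mu : ℕ → ℝ)
    (hlamnonpos : ∀ i : ℕ, k ≤ i → i < n → lam i ≤ 0)
    (hmunonpos : ∀ i : ℕ, i < r → mu i ≤ 0)
    (hAdiag : ∃ U ∈ Matrix.unitaryGroup (Fin n) ℂ,
      A = U * Matrix.diagonal (fun i : Fin n => (lam i : ℂ)) * Uᴴ)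
    (hDdiag : ∃ V ∈ Matrix.unitaryGroup (Fin m) ℂ,
      D = V * Matrix.diagonal (fun j : Fin m => (mu j : ℂ)) * Vᴴ)
    (hp : p = Module.finrank ℂ (LinearMap.ker D.mulVecLin))
    (hrpk : k < r - p) :
    ¬ ∃ K : Matrix (Fin n) (Fin m) ℂ, (D + Kᴴ * A * K).PosSemidef := by
  rintro ⟨K, hpsd⟩
  obtain ⟨U, -, rfl⟩ := hAdiag
  obtain ⟨V, hV, rfl⟩ := hDdiag
  have hpos : #{i : Fin n | 0 < lam i} ≤ k :=
    calc #{i : Fin n | 0 < lam i} ≤ #{i : Fin n | i < k} :=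
          card_le_card fun i hi => by
            simp only [mem_filter, mem_univ, true_and] at hi ⊢
            exact not_le.mp fun hki => (hlamnonpos i hki i.2).not_gt hi
      _ ≤ k := Fin.card_filter_val_lt.trans_le (min_le_right _ _)
  have hzero : p = #{j : Fin m | mu j = 0} := by
    simpa using hp.trans (finrank_ker_mulVecLin_unitary_mul_diagonal_mul hV _)
  have hneg : r ≤ #{j : Fin m | mu j < 0} + p :=
    calc r = #{j : Fin m | j < r} := by rw [Fin.card_filter_val_lt, min_eq_right hrm]
      _ ≤ #(({j | mu j < 0} : Finset (Fin m)) ∪ ({j | mu j = 0} : Finset (Fin m))) :=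
          card_le_card fun j hj => by
            simp only [mem_filter, mem_union, mem_univ, true_and] at hj ⊢
            exact (hmunonpos j hj).lt_or_eq
      _ ≤ _ := hzero ▸ card_union_le _ _
  exact not_posSemidef_unitary_conj_diagonal_add hV (fun j : Fin m => mu j)
    (fun i : Fin n => lam i) K (by omega) hpsd

/-- Let `A ∈ ℂ^{n×n}` be Hermitian with eigenvalues (counted with multiplicities,
nonincreasing) `lam 0 ≥ … ≥ lam (k-1) > 0 ≥ lam k ≥ … ≥ lam (n-1)`, let `D ∈ ℂ^{m×m}`
be Hermitian with eigenvalues (nondecreasing) `mu 0 ≤ … ≤ mu (r-1) ≤ 0 < mu r ≤ … ≤ mu (m-1)`,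
and let `p = dim ker D`.  If `r − p > k`, then there is no `K ∈ ℂ^{n×m}` such that
`D + KᴴAK` is positive semidefinite. -/
theorem no_possemidef_completion_of_r_sub_p_gt_k
    (n m k r p : ℕ) (hkn : k ≤ n) (hrm : r ≤ m)
    (A : Matrix (Fin n) (Fin n) ℂ) (D : Matrix (Fin m) (Fin m) ℂ)
    (lam mu : ℕ → ℝ)
    (hlam : ∀ i j : ℕ, i ≤ j → j < n → lam j ≤ lam i)
    (hlampos : ∀ i : ℕ, i < k → 0 < lam i)
    (hlamnonpos : ∀ i : ℕ, k ≤ i → i < n → lam i ≤ 0)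
    (hmu : ∀ i j : ℕ, i ≤ j → j < m → mu i ≤ mu j)
    (hmunonpos : ∀ i : ℕ, i < r → mu i ≤ 0)
    (hmupos : ∀ i : ℕ, r ≤ i → i < m → 0 < mu i)
    (hAdiag : ∃ U ∈ Matrix.unitaryGroup (Fin n) ℂ,
      A = U * Matrix.diagonal (fun i : Fin n => (lam i : ℂ)) * Uᴴ)
    (hDdiag : ∃ V ∈ Matrix.unitaryGroup (Fin m) ℂ,
      D = V * Matrix.diagonal (fun j : Fin m => (mu j : ℂ)) * Vᴴ)
    (hp : p = Module.finrank ℂ (LinearMap.ker D.mulVecLin))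
    (hrpk : k < r - p) :
    ¬ ∃ K : Matrix (Fin n) (Fin m) ℂ, (D + Kᴴ * A * K).PosSemidef :=
  no_possemidef_completion_of_r_sub_p_gt_k_general n m k r p hrm A D lam mu hlamnonpos hmunonpos
    hAdiag hDdiag hp hrpk
end

section
/- Let κ > 0, λ > 0, μ ≤ 0 with κ²λ + μ ≥ 0, set α := (λ − μ)²/(4λ²), and for 0 < ε ≤ κ² define the complex numbers η^± := (λ + μ)/2 ± λ√(α − ε) (where for α − ε < 0 the square root is taken as i√(ε − α)). Then: (a) if 0 < ε < −μ/λ, then λ > η^+ > 0 > η^− > μ (all real); (b) if −μ/λ ≤ ε < α, then η^± are real and max{λ + μ, 0} ≥ η^+ > η^− ≥ min{λ + μ, 0}; (c) if α < ε ≤ κ², then η^+ and η^− are non-real and η^+ is the complex conjugate of η^−. -/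
/-!
When `ε ≤ α`, the numbers `η±` are real and are the roots of
`q(z) = z² − (l + u) z + l (u + l ε)`. Since `q(l) = q(u) = l² ε > 0` while `q(0) = l (u + l ε)`,
the sign of `u + l ε` locates the roots: for `u + l ε < 0` they separate `u < 0 < l`, and for
`u + l ε ≥ 0` they have the same sign, hence both lie between `0` and their sum `l + u`.
When `ε > α`, `sqrtC (α − ε)` is purely imaginary and `η±` are conjugate.
-/

open ComplexConjugate

/-- The principal square root of a real number, as a complex number:
`sqrtC x = √x` for `x ≥ 0` and `sqrtC x = i·√(−x)` for `x < 0`. -/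
noncomputable def sqrtC (x : ℝ) : ℂ :=
  if 0 ≤ x then (Real.sqrt x : ℂ) else Complex.I * (Real.sqrt (-x) : ℂ)

theorem sqrtC_of_nonneg {x : ℝ} (hx : 0 ≤ x) : sqrtC x = (√x : ℂ) := if_pos hx

theorem sqrtC_of_neg {x : ℝ} (hx : x < 0) : sqrtC x = Complex.I * (√(-x) : ℂ) :=
  if_neg hx.not_ge

section SqrtC

variable {c l x : ℝ}

theorem ofReal_add_mul_sqrtC (hx : 0 ≤ x) : (c : ℂ) + l * sqrtC x = ((c + l * √x : ℝ) : ℂ) := by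
  rw [sqrtC_of_nonneg hx]; push_cast; rfl

theorem ofReal_sub_mul_sqrtC (hx : 0 ≤ x) : (c : ℂ) - l * sqrtC x = ((c - l * √x : ℝ) : ℂ) := by
  rw [sqrtC_of_nonneg hx]; push_cast; rfl

theorem im_add_mul_sqrtC (hx : x < 0) : ((c : ℂ) + l * sqrtC x).im = l * √(-x) := by
  simp [sqrtC_of_neg hx]

theorem im_sub_mul_sqrtC (hx : x < 0) : ((c : ℂ) - l * sqrtC x).im = -(l * √(-x)) := by
  simp [sqrtC_of_neg hx]

theorem conj_sub_mul_sqrtC (hx : x < 0) :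
    conj ((c : ℂ) - l * sqrtC x) = (c : ℂ) + l * sqrtC x := by
  simp only [sqrtC_of_neg hx, map_sub, map_mul, Complex.conj_I, Complex.conj_ofReal]
  ring

end SqrtC

section QuadraticRoots

variable {R : Type*} [CommRing R] [LinearOrder R] [IsStrictOrderedRing R] {a b l u ε : R}

theorem root_bounds_of_mul_neg (hba : b ≤ a) (hsum : a + b = l + u)
    (hprod : a * b = l * (u + l * ε)) (hl : 0 < l) (hε : 0 < ε) (h : l * ε < -u) :
    u < b ∧ b < 0 ∧ 0 < a ∧ a < l := by
  have hq : ∀ z, (z - a) * (z - b) = z ^ 2 - (l + u) * z + l * (u + l * ε) := fun z => by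
    linear_combination (-z) * hsum + hprod
  have hql : 0 < (l - a) * (l - b) := by rw [hq]; ring_nf; positivity
  have hqu : 0 < (u - a) * (u - b) := by rw [hq]; ring_nf; positivity
  have hab : a * b < 0 := hprod ▸ mul_neg_of_pos_of_neg hl (by linarith)
  obtain ⟨ha, hb⟩ := (mul_neg_iff.mp hab).resolve_right fun ⟨ha, hb⟩ => by linarith
  refine ⟨?_, hb, ha, ?_⟩
  · linarith [neg_of_mul_pos_right hqu (by linarith)]
  · linarith [(pos_iff_pos_of_mul_pos hql).mpr (by linarith)]

theorem le_max_add_of_mul_nonneg (h : 0 ≤ a * b) : a ≤ max (a + b) 0 := by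
  rcases le_or_gt a 0 with ha | ha
  · exact ha.trans (le_max_right _ _)
  · exact le_max_of_le_left (by linarith [nonneg_of_mul_nonneg_right h ha])

theorem min_add_le_of_mul_nonneg (h : 0 ≤ a * b) : min (a + b) 0 ≤ b := by
  rcases le_or_gt 0 b with hb | hb
  · exact (min_le_right _ _).trans hb
  · exact min_le_of_left_le (by linarith [nonpos_of_mul_nonneg_left h hb])

theorem root_bounds_of_mul_nonneg (hsum : a + b = l + u) (hprod : a * b = l * (u + l * ε))
    (hl : 0 ≤ l) (h : -u ≤ l * ε) : a ≤ max (l + u) 0 ∧ min (l + u) 0 ≤ b := by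
  have hab : 0 ≤ a * b := hprod ▸ mul_nonneg hl (by linarith)
  rw [← hsum]
  exact ⟨le_max_add_of_mul_nonneg hab, min_add_le_of_mul_nonneg hab⟩

end QuadraticRoots

section Eta

variable {l u α ε : ℝ}

theorem le_sq_sub_div_of_mul_le_neg (hl : 0 < l) (h : l * ε ≤ -u) :
    ε ≤ (l - u) ^ 2 / (4 * l ^ 2) := by
  rw [le_div_iff₀ (by positivity)]
  nlinarith [sq_nonneg (l + u)]

theorem add_mul_sqrt_mul_sub_mul_sqrt (hl : l ≠ 0) (hα : α = (l - u) ^ 2 / (4 * l ^ 2))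
    (h : ε ≤ α) :
    ((l + u) / 2 + l * √(α - ε)) * ((l + u) / 2 - l * √(α - ε)) = l * (u + l * ε) := by
  have hsq := Real.sq_sqrt (sub_nonneg.mpr h)
  have h4α : 4 * l ^ 2 * α = (l - u) ^ 2 := by rw [hα]; field_simp
  linear_combination (-l ^ 2) * hsq - h4α / 4

end Eta

theorem eta_cases_general
    (l u ε : ℝ) (hl : 0 < l) (hε0 : 0 < ε) :
    ∀ α ηp ηm, α = (l - u) ^ 2 / (4 * l ^ 2) →
      ηp = (((l + u) / 2 : ℝ) : ℂ) + (l : ℂ) * sqrtC (α - ε) →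
      ηm = (((l + u) / 2 : ℝ) : ℂ) - (l : ℂ) * sqrtC (α - ε) →
    ((ε < -u / l →
        ηp.im = 0 ∧ ηm.im = 0 ∧ ηp.re < l ∧ 0 < ηp.re ∧ ηm.re < 0 ∧ u < ηm.re) ∧
     (-u / l ≤ ε → ε < α →
        ηp.im = 0 ∧ ηm.im = 0 ∧ ηp.re ≤ max (l + u) 0 ∧ ηm.re < ηp.re ∧
          min (l + u) 0 ≤ ηm.re) ∧
     (α < ε → ηp.im ≠ 0 ∧ ηm.im ≠ 0 ∧ ηp = conj ηm)) := by
  rintro α ηp ηm hα rfl rfl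
  refine ⟨fun h => ?_, fun h hεα => ?_, fun h => ?_⟩
  · have hlε : l * ε < -u := by rw [lt_div_iff₀ hl] at h; linarith
    have hεα : ε ≤ α := hα ▸ le_sq_sub_div_of_mul_le_neg hl hlε.le
    have hd : 0 ≤ l * √(α - ε) := by positivity
    rw [ofReal_add_mul_sqrtC (sub_nonneg.mpr hεα), ofReal_sub_mul_sqrtC (sub_nonneg.mpr hεα)]
    obtain ⟨hub, hb, ha, hal⟩ := root_bounds_of_mul_neg (by linarith) (by ring)
      (add_mul_sqrt_mul_sub_mul_sqrt hl.ne' hα hεα) hl hε0 hlε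
    exact ⟨Complex.ofReal_im _, Complex.ofReal_im _, hal, ha, hb, hub⟩
  · have hlε : -u ≤ l * ε := by rw [div_le_iff₀ hl] at h; linarith
    have hd : 0 < l * √(α - ε) := mul_pos hl (Real.sqrt_pos.mpr (by linarith))
    rw [ofReal_add_mul_sqrtC (by linarith), ofReal_sub_mul_sqrtC (by linarith)]
    obtain ⟨hmax, hmin⟩ := root_bounds_of_mul_nonneg (by ring)
      (add_mul_sqrt_mul_sub_mul_sqrt hl.ne' hα hεα.le) hl.le hlε
    exact ⟨Complex.ofReal_im _, Complex.ofReal_im _, hmax,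
      by simp only [Complex.ofReal_re]; linarith, hmin⟩
  · have hx : α - ε < 0 := by linarith
    have him : 0 < l * √(-(α - ε)) := mul_pos hl (Real.sqrt_pos.mpr (by linarith))
    rw [im_add_mul_sqrtC hx, im_sub_mul_sqrtC hx, conj_sub_mul_sqrtC hx]
    exact ⟨him.ne', by linarith, rfl⟩

/-- Let `κ > 0`, `l > 0`, `u ≤ 0` with `κ²l + u ≥ 0`, set `α := (l − u)²/(4l²)`, and for
`0 < ε ≤ κ²` define `η± := (l + u)/2 ± l·√(α − ε)` (complex square root for `α − ε < 0`).
Then: (a) if `0 < ε < −u/l`, then `l > η⁺ > 0 > η⁻ > u` (all real);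
(b) if `−u/l ≤ ε < α`, then `η±` are real and `max{l+u,0} ≥ η⁺ > η⁻ ≥ min{l+u,0}`;
(c) if `α < ε ≤ κ²`, then `η⁺, η⁻` are non-real and complex conjugates of each other. -/
theorem eta_cases
    (κ l u ε : ℝ) (hκ : 0 < κ) (hl : 0 < l) (hu : u ≤ 0)
    (hcond : 0 ≤ κ ^ 2 * l + u) (hε0 : 0 < ε) (hεκ : ε ≤ κ ^ 2) :
    ∀ α ηp ηm, α = (l - u) ^ 2 / (4 * l ^ 2) →
      ηp = (((l + u) / 2 : ℝ) : ℂ) + (l : ℂ) * sqrtC (α - ε) →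
      ηm = (((l + u) / 2 : ℝ) : ℂ) - (l : ℂ) * sqrtC (α - ε) →
    ((ε < -u / l →
        ηp.im = 0 ∧ ηm.im = 0 ∧ ηp.re < l ∧ 0 < ηp.re ∧ ηm.re < 0 ∧ u < ηm.re) ∧
     (-u / l ≤ ε → ε < α →
        ηp.im = 0 ∧ ηm.im = 0 ∧ ηp.re ≤ max (l + u) 0 ∧ ηm.re < ηp.re ∧
          min (l + u) 0 ≤ ηm.re) ∧
     (α < ε → ηp.im ≠ 0 ∧ ηm.im ≠ 0 ∧ ηp = conj ηm)) :=
  eta_cases_general l u ε hl hε0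
end

section
/- Let A ∈ ℂ^{n×n} be Hermitian with eigenvalues λ_1 ≥ … ≥ λ_k > 0 ≥ λ_{k+1} ≥ … ≥ λ_n and D ∈ ℂ^{m×m} be Hermitian with eigenvalues μ_1 ≤ … ≤ μ_r ≤ 0 < μ_{r+1} ≤ … ≤ μ_m, with p = dim ker D. Let κ > 0 and assume r − p ≤ k and κ²λ_i + μ_i ≥ 0 for i = 1,…,r−p. For i = 1,…,r−p choose 0 < ε_i ≤ κ² with ε_iλ_i + μ_i ≥ 0, set ε_j = 0 for j = r−p+1,…,r, and define K := U E V* with U, V unitary satisfying A = U·diag(λ_1,…,λ_n)·U*, D = V·diag(μ_1,…,μ_m)·V*, and E ∈ ℂ^{n×m} having (i,i)-entry √ε_i for i ≤ r and zeros elsewhere. If ε_{i₀} = α_{i₀} := (λ_{i₀} − μ_{i₀})²/(4λ_{i₀}²) for some i₀ ∈ {1,…,r−p}, then η := (λ_{i₀} + μ_{i₀})/2 is an eigenvalue of S = [[A, −AK],[K*A, D]] possessing a Jordan chain of length 2; that is, there exists x ∈ ℂ^{n+m} with (S − ηI)x ≠ 0 and (S − ηI)²x = 0. In particular S is not diagonalizable.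 -/
open scoped Matrix ComplexOrder

/-!
Put `u = U e_{i₀}` and `v = V e_{i₀}`. The plane spanned by `(u, 0)` and `(0, v)` is invariant
under `S`, which acts on it by `[[λ, -λ√ε], [λ√ε, μ]]` (with `λ = λ_{i₀}`, `μ = μ_{i₀}`,
`ε = ε_{i₀}`). This `2 × 2` block has trace `2η`, and its discriminant `(λ - μ)² - 4λ²ε` vanishes
exactly when `ε = α_{i₀}`; the block is then `η` plus a nonzero nilpotent, so `(u, 0)` starts a
Jordan chain of length 2 at `η`. A diagonalizable matrix has no such chain, because for a diagonal
matrix `g² t = 0` forces `g t = 0` entrywise.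
-/

namespace Matrix

section diagonalizable

variable {ι R : Type*} [Fintype ι] [DecidableEq ι]

theorem mem_spectrum_of_sub_smul_mulVec_eq_zero [Field R] {S : Matrix ι ι R} {η : R}
    {v : ι → R} (hv : v ≠ 0) (h : (S - η • 1) *ᵥ v = 0) : η ∈ spectrum R S := by
  rw [spectrum.mem_iff, Algebra.algebraMap_eq_smul_one, ← neg_sub, IsUnit.neg_iff,
    ← mulVec_injective_iff_isUnit]
  exact fun hinj => hv (hinj (h.trans (mulVec_zero _).symm))

theorem diagonal_mulVec_eq_zero_of_mulVec_mulVec_eq_zero [CommSemiring R] [IsReduced R]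
    {g x : ι → R} (hx : diagonal g *ᵥ (diagonal g *ᵥ x) = 0) : diagonal g *ᵥ x = 0 := by
  funext i
  have hi : g i * (g i * x i) = 0 := by simpa [mulVec_diagonal] using congrFun hx i
  have hsq : (g i * x i) ^ 2 = 0 := by
    rw [show (g i * x i) ^ 2 = x i * (g i * (g i * x i)) by ring, hi, mul_zero]
  rw [mulVec_diagonal, Pi.zero_apply]
  exact IsReduced.eq_zero _ ⟨2, hsq⟩

theorem sub_smul_mulVec_eq_zero_of_mulVec_mulVec_eq_zero [CommRing R] [IsReduced R]
    {S P : Matrix ι ι R} {d : ι → R} (hP : IsUnit P) (hS : S = P * diagonal d * P⁻¹) (η : R)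
    {x : ι → R} (hx : (S - η • 1) *ᵥ ((S - η • 1) *ᵥ x) = 0) : (S - η • 1) *ᵥ x = 0 := by
  have hdet := (isUnit_iff_isUnit_det P).1 hP
  have hN : ∀ v, (S - η • 1) *ᵥ v = P *ᵥ (diagonal (fun i => d i - η) *ᵥ (P⁻¹ *ᵥ v)) := by
    intro v
    rw [mulVec_mulVec, mulVec_mulVec, ← diagonal_sub d fun _ => η, ← smul_one_eq_diagonal,
      mul_sub, sub_mul, Matrix.mul_smul, Matrix.smul_mul, mul_one, mul_nonsing_inv P hdet, hS]
  have hcancel : ∀ v, P⁻¹ *ᵥ (P *ᵥ v) = v := fun v => by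
    rw [mulVec_mulVec, nonsing_inv_mul P hdet, one_mulVec]
  have hd : diagonal (fun i => d i - η) *ᵥ (diagonal (fun i => d i - η) *ᵥ (P⁻¹ *ᵥ x)) = 0 := by
    rw [hN, hN, hcancel] at hx
    simpa only [hcancel, mulVec_zero] using congrArg (P⁻¹ *ᵥ ·) hx
  rw [hN, diagonal_mulVec_eq_zero_of_mulVec_mulVec_eq_zero hd, mulVec_zero]

end diagonalizable

section fromBlocks

variable {l m R : Type*} [Fintype l] [Fintype m] [DecidableEq l] [DecidableEq m] [CommRing R]
  {A : Matrix l l R} {B : Matrix l m R} {C : Matrix m l R} {D : Matrix m m R}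
  {u₁ : l → R} {u₂ : m → R} {a b c d η : R}

theorem fromBlocks_sub_smul_mulVec_sumElim_smul (hA : A *ᵥ u₁ = a • u₁)
    (hB : B *ᵥ u₂ = c • u₁) (hC : C *ᵥ u₁ = b • u₂) (hD : D *ᵥ u₂ = d • u₂) (x y : R) :
    (fromBlocks A B C D - η • 1) *ᵥ Sum.elim (x • u₁) (y • u₂) =
      Sum.elim (((a - η) * x + c * y) • u₁) ((b * x + (d - η) * y) • u₂) := by
  rw [sub_mulVec, smul_mulVec, one_mulVec, fromBlocks_mulVec]
  ext (i | j) <;>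
    simp only [Sum.elim_comp_inl, Sum.elim_comp_inr, mulVec_smul, hA, hB, hC, hD, Pi.sub_apply,
      Sum.elim_inl, Sum.elim_inr, Pi.add_apply, Pi.smul_apply, smul_eq_mul] <;>
    ring

theorem fromBlocks_sub_smul_jordan_chain (hA : A *ᵥ u₁ = a • u₁)
    (hB : B *ᵥ u₂ = c • u₁) (hC : C *ᵥ u₁ = b • u₂) (hD : D *ᵥ u₂ = d • u₂)
    (hbu : b • u₂ ≠ 0) (hdisc : (a - η) ^ 2 + b * c = 0) (htr : a + d = 2 * η) :
    (fromBlocks A B C D - η • 1) *ᵥ Sum.elim u₁ 0 ≠ 0 ∧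
      (fromBlocks A B C D - η • 1) *ᵥ ((fromBlocks A B C D - η • 1) *ᵥ Sum.elim u₁ 0) = 0 := by
  have hu : Sum.elim u₁ 0 = Sum.elim ((1 : R) • u₁) ((0 : R) • u₂) := by simp
  simp only [hu, fromBlocks_sub_smul_mulVec_sumElim_smul hA hB hC hD, mul_one, mul_zero,
    add_zero]
  refine ⟨fun h => hbu ?_, ?_⟩
  · simpa using congrArg (fun v => v ∘ Sum.inr) h
  · have h₁ : (a - η) * (a - η) + c * b = 0 := by linear_combination hdisc
    have h₂ : b * (a - η) + (d - η) * b = 0 := by linear_combination b * htr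
    rw [h₁, h₂, zero_smul, zero_smul]
    ext (i | j) <;> rfl

end fromBlocks

section conj

variable {k l m o R : Type*} [Fintype l] [Fintype m] [Fintype o] [DecidableEq m]
  [CommSemiring R] {U : Matrix k l R} {X : Matrix l m R} {W : Matrix m o R} {V : Matrix o m R}

theorem mul_mul_mul_mul_mul_of_mul_eq_one {p q : Type*} [Fintype p] (hWV : W * V = 1)
    (Y : Matrix m p R) (Z : Matrix p q R) : U * X * W * (V * Y * Z) = U * (X * Y) * Z := by
  simp only [Matrix.mul_assoc]
  rw [← Matrix.mul_assoc W, hWV, Matrix.one_mul]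

theorem mul_mul_mulVec_mulVec_single [DecidableEq l] (hWV : W * V = 1) {i : l} {j : m} {c : R}
    (hX : X *ᵥ Pi.single j 1 = Pi.single i c) :
    (U * X * W) *ᵥ (V *ᵥ Pi.single j 1) = c • (U *ᵥ Pi.single i 1) := by
  rw [← mulVec_mulVec, ← mulVec_mulVec, mulVec_mulVec _ W, hWV, one_mulVec, hX, ← mulVec_smul,
    ← Pi.single_smul', smul_eq_mul, mul_one]

end conj

section unitaryConj

variable {l m R : Type*} [Fintype l] [Fintype m] [DecidableEq l] [DecidableEq m] [Field R]
  [StarRing R] {U : Matrix l l R} {V : Matrix m m R} {A : Matrix l l R} {D : Matrix m m R}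
  {E K : Matrix l m R} {Λ : l → R} {M : m → R} {i : l} {j : m} {s η : R}

theorem fromBlocks_jordan_chain_of_unitary_conj (hU : Uᴴ * U = 1) (hV : Vᴴ * V = 1)
    (hA : A = U * diagonal Λ * Uᴴ) (hD : D = V * diagonal M * Vᴴ) (hK : K = U * E * Vᴴ)
    (hEcol : E *ᵥ Pi.single j 1 = Pi.single i s) (hErow : Eᴴ *ᵥ Pi.single i 1 = Pi.single j s)
    (hΛs : Λ i * s ≠ 0) (hdisc : (Λ i - η) ^ 2 = (Λ i * s) ^ 2) (htr : Λ i + M j = 2 * η) :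
    ∃ x, (fromBlocks A (-(A * K)) (Kᴴ * A) D - η • 1) *ᵥ x ≠ 0 ∧
      (fromBlocks A (-(A * K)) (Kᴴ * A) D - η • 1) *ᵥ
        ((fromBlocks A (-(A * K)) (Kᴴ * A) D - η • 1) *ᵥ x) = 0 := by
  have hAu : A *ᵥ (U *ᵥ Pi.single i 1) = Λ i • (U *ᵥ Pi.single i 1) := by
    rw [hA, mul_mul_mulVec_mulVec_single hU (by rw [diagonal_mulVec_single, mul_one])]
  have hDu : D *ᵥ (V *ᵥ Pi.single j 1) = M j • (V *ᵥ Pi.single j 1) := by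
    rw [hD, mul_mul_mulVec_mulVec_single hV (by rw [diagonal_mulVec_single, mul_one])]
  have hAKu : (-(A * K)) *ᵥ (V *ᵥ Pi.single j 1) = (-(Λ i * s)) • (U *ᵥ Pi.single i 1) := by
    have hX : (diagonal Λ * E) *ᵥ Pi.single j 1 = Pi.single i (Λ i * s) := by
      rw [← mulVec_mulVec, hEcol, diagonal_mulVec_single]
    rw [hA, hK, mul_mul_mul_mul_mul_of_mul_eq_one hU, neg_mulVec,
      mul_mul_mulVec_mulVec_single hV hX, neg_smul]
  have hKAu : (Kᴴ * A) *ᵥ (U *ᵥ Pi.single i 1) = (Λ i * s) • (V *ᵥ Pi.single j 1) := by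
    have hKH : Kᴴ = V * Eᴴ * Uᴴ := by
      rw [hK, conjTranspose_mul, conjTranspose_mul, conjTranspose_conjTranspose, Matrix.mul_assoc]
    have hX : (Eᴴ * diagonal Λ) *ᵥ Pi.single i 1 = Pi.single j (Λ i * s) := by
      rw [← mulVec_mulVec, diagonal_mulVec_single, ← smul_eq_mul, Pi.single_smul', mulVec_smul,
        hErow, ← Pi.single_smul', smul_eq_mul]
    rw [hKH, hA, mul_mul_mul_mul_mul_of_mul_eq_one hU, mul_mul_mulVec_mulVec_single hU hX]
  have hVu : V *ᵥ Pi.single j 1 ≠ 0 := fun h => by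
    have h' := congrArg (Vᴴ *ᵥ ·) h
    simp only [mulVec_mulVec, hV, one_mulVec, mulVec_zero] at h'
    exact one_ne_zero (congrFun h' j |>.symm.trans (Pi.single_eq_same j 1)).symm
  exact ⟨_, fromBlocks_sub_smul_jordan_chain hAu hAKu hKAu hDu (smul_ne_zero hΛs hVu)
    (by linear_combination hdisc) (by linear_combination htr)⟩

end unitaryConj

section rectDiagonal

variable {n m r : ℕ} {R : Type*} [CommSemiring R] {E : Matrix (Fin n) (Fin m) R}
  {f : ℕ → R} {i : Fin n} {j : Fin m}

theorem mulVec_single_one_of_eq_ite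
    (hE : ∀ i j, E i j = if (i : ℕ) = (j : ℕ) ∧ (j : ℕ) < r then f j else 0)
    (hij : (i : ℕ) = j) (hj : (j : ℕ) < r) : E *ᵥ Pi.single j 1 = Pi.single i (f j) := by
  ext i'
  simp [hE, Pi.single_apply, ← Fin.val_inj, hij, hj]

theorem conjTranspose_mulVec_single_one_of_eq_ite [StarRing R]
    (hE : ∀ i j, E i j = if (i : ℕ) = (j : ℕ) ∧ (j : ℕ) < r then f j else 0)
    (hij : (i : ℕ) = j) (hj : (j : ℕ) < r) :
    Eᴴ *ᵥ Pi.single i 1 = Pi.single j (star (f j)) := by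
  ext j'
  by_cases h : j' = j
  · simp [hE, h, hij, hj]
  · simp [hE, h, hij, Fin.val_ne_of_ne (Ne.symm h)]

end rectDiagonal

end Matrix

open Matrix in
theorem jordan_chain_blockMatrix_general
    (n m k r p : ℕ) (hkn : k ≤ n) (hrm : r ≤ m)
    (lam mu eps : ℕ → ℝ)
    (hlampos : ∀ i : ℕ, i < k → 0 < lam i)
    (D : Matrix (Fin m) (Fin m) ℂ)
    (hrpk : r - p ≤ k)
    (heps0 : ∀ i : ℕ, i < r - p → 0 < eps i)
    (U : Matrix (Fin n) (Fin n) ℂ) (hU : U ∈ Matrix.unitaryGroup (Fin n) ℂ)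
    (V : Matrix (Fin m) (Fin m) ℂ) (hV : V ∈ Matrix.unitaryGroup (Fin m) ℂ)
    (A : Matrix (Fin n) (Fin n) ℂ)
    (hA : A = U * Matrix.diagonal (fun i : Fin n => (lam i : ℂ)) * Uᴴ)
    (hD : D = V * Matrix.diagonal (fun j : Fin m => (mu j : ℂ)) * Vᴴ)
    (E : Matrix (Fin n) (Fin m) ℂ)
    (hE : ∀ (i : Fin n) (j : Fin m),
      E i j = if (i : ℕ) = (j : ℕ) ∧ (j : ℕ) < r then (Real.sqrt (eps j) : ℂ) else 0)
    (K : Matrix (Fin n) (Fin m) ℂ) (hK : K = U * E * Vᴴ)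
    (S : Matrix (Fin n ⊕ Fin m) (Fin n ⊕ Fin m) ℂ)
    (hS : S = Matrix.fromBlocks A (-(A * K)) (Kᴴ * A) D)
    (i₀ : ℕ) (hi₀ : i₀ < r - p)
    (hα : eps i₀ = (lam i₀ - mu i₀) ^ 2 / (4 * lam i₀ ^ 2))
    (η : ℂ) (hη : η = (((lam i₀ + mu i₀) / 2 : ℝ) : ℂ)) :
    η ∈ spectrum ℂ S ∧
    (∃ x : (Fin n ⊕ Fin m) → ℂ,
      (S - η • 1).mulVec x ≠ 0 ∧
      (S - η • 1).mulVec ((S - η • 1).mulVec x) = 0) ∧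
    ¬ ∃ (P : Matrix (Fin n ⊕ Fin m) (Fin n ⊕ Fin m) ℂ) (d : (Fin n ⊕ Fin m) → ℂ),
        IsUnit P ∧ S = P * Matrix.diagonal d * P⁻¹ := by
  have hi₀k : i₀ < k := hi₀.trans_le hrpk
  have hi₀r : i₀ < r := hi₀.trans_le (r.sub_le p)
  let iN : Fin n := ⟨i₀, hi₀k.trans_le hkn⟩
  let iM : Fin m := ⟨i₀, hi₀r.trans_le hrm⟩
  have heps : 0 < eps i₀ := heps0 i₀ hi₀
  have hlam : (lam i₀ : ℂ) ≠ 0 := Complex.ofReal_ne_zero.2 (hlampos i₀ hi₀k).ne'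
  have hs : (√(eps i₀) : ℂ) ≠ 0 := Complex.ofReal_ne_zero.2 (Real.sqrt_pos.2 heps).ne'
  have hdisc : ((lam i₀ : ℂ) - η) ^ 2 = (lam i₀ * √(eps i₀) : ℂ) ^ 2 := by
    have hs2 : (√(eps i₀) : ℂ) ^ 2 = eps i₀ := by exact_mod_cast Real.sq_sqrt heps.le
    rw [mul_pow, hs2, hα, hη]
    push_cast
    field_simp
    ring
  have htr : (lam i₀ : ℂ) + mu i₀ = 2 * η := by rw [hη]; push_cast; ring
  have hEcol := mulVec_single_one_of_eq_ite (f := fun j => (√(eps j) : ℂ)) hE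
    (i := iN) (j := iM) rfl hi₀r
  have hErow := conjTranspose_mulVec_single_one_of_eq_ite (f := fun j => (√(eps j) : ℂ)) hE
    (i := iN) (j := iM) rfl hi₀r
  rw [Complex.star_def, Complex.conj_ofReal] at hErow
  obtain ⟨x, hNx, hN2x⟩ := hS ▸ fromBlocks_jordan_chain_of_unitary_conj hU.1 hV.1 hA hD hK
    hEcol hErow (mul_ne_zero hlam hs) hdisc htr
  refine ⟨mem_spectrum_of_sub_smul_mulVec_eq_zero hNx hN2x, ⟨x, hNx, hN2x⟩, ?_⟩
  rintro ⟨P, d, hP, hPd⟩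
  exact hNx (sub_smul_mulVec_eq_zero_of_mulVec_mulVec_eq_zero hP hPd η hN2x)

/-- If in the construction of `S = [[A, −AK],[KᴴA, D]]` (positive semidefinite case) one has
`ε i₀ = α i₀ = (lam i₀ − mu i₀)²/(4(lam i₀)²)` for some `i₀ < r − p`, then
`η = (lam i₀ + mu i₀)/2` is an eigenvalue of `S` with a Jordan chain of length 2; in
particular `S` is not diagonalizable. -/
theorem jordan_chain_blockMatrix
    (n m k r p : ℕ) (hkn : k ≤ n) (hrm : r ≤ m) (hpr : p ≤ r)
    (κ : ℝ) (hκ : 0 < κ)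
    (lam mu eps : ℕ → ℝ)
    (hlam : ∀ i j : ℕ, i ≤ j → j < n → lam j ≤ lam i)
    (hlampos : ∀ i : ℕ, i < k → 0 < lam i)
    (hlamnonpos : ∀ i : ℕ, k ≤ i → i < n → lam i ≤ 0)
    (hmu : ∀ i j : ℕ, i ≤ j → j < m → mu i ≤ mu j)
    (hmunonpos : ∀ i : ℕ, i < r → mu i ≤ 0)
    (hmupos : ∀ i : ℕ, r ≤ i → i < m → 0 < mu i)
    (D : Matrix (Fin m) (Fin m) ℂ)
    (hp : p = Module.finrank ℂ (LinearMap.ker D.mulVecLin))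
    (hrpk : r - p ≤ k)
    (hcond : ∀ i : ℕ, i < r - p → 0 ≤ κ ^ 2 * lam i + mu i)
    (heps0 : ∀ i : ℕ, i < r - p → 0 < eps i)
    (hepsκ : ∀ i : ℕ, i < r - p → eps i ≤ κ ^ 2)
    (hepsc : ∀ i : ℕ, i < r - p → 0 ≤ eps i * lam i + mu i)
    (hepsz : ∀ j : ℕ, r - p ≤ j → j < r → eps j = 0)
    (U : Matrix (Fin n) (Fin n) ℂ) (hU : U ∈ Matrix.unitaryGroup (Fin n) ℂ)
    (V : Matrix (Fin m) (Fin m) ℂ) (hV : V ∈ Matrix.unitaryGroup (Fin m) ℂ)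
    (A : Matrix (Fin n) (Fin n) ℂ)
    (hA : A = U * Matrix.diagonal (fun i : Fin n => (lam i : ℂ)) * Uᴴ)
    (hD : D = V * Matrix.diagonal (fun j : Fin m => (mu j : ℂ)) * Vᴴ)
    (E : Matrix (Fin n) (Fin m) ℂ)
    (hE : ∀ (i : Fin n) (j : Fin m),
      E i j = if (i : ℕ) = (j : ℕ) ∧ (j : ℕ) < r then (Real.sqrt (eps j) : ℂ) else 0)
    (K : Matrix (Fin n) (Fin m) ℂ) (hK : K = U * E * Vᴴ)
    (S : Matrix (Fin n ⊕ Fin m) (Fin n ⊕ Fin m) ℂ)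
    (hS : S = Matrix.fromBlocks A (-(A * K)) (Kᴴ * A) D)
    (i₀ : ℕ) (hi₀ : i₀ < r - p)
    (hα : eps i₀ = (lam i₀ - mu i₀) ^ 2 / (4 * lam i₀ ^ 2))
    (η : ℂ) (hη : η = (((lam i₀ + mu i₀) / 2 : ℝ) : ℂ)) :
    η ∈ spectrum ℂ S ∧
    (∃ x : (Fin n ⊕ Fin m) → ℂ,
      (S - η • 1).mulVec x ≠ 0 ∧
      (S - η • 1).mulVec ((S - η • 1).mulVec x) = 0) ∧
    ¬ ∃ (P : Matrix (Fin n ⊕ Fin m) (Fin n ⊕ Fin m) ℂ) (d : (Fin n ⊕ Fin m) → ℂ),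
        IsUnit P ∧ S = P * Matrix.diagonal d * P⁻¹ :=
  jordan_chain_blockMatrix_general n m k r p hkn hrm lam mu eps hlampos D hrpk heps0 U hU V hV A hA
    hD E hE K hK S hS i₀ hi₀ hα η hη
end

section
/- Let A ∈ ℂ^{n×n} be Hermitian with eigenvalues λ_1 ≥ … ≥ λ_k > 0 ≥ λ_{k+1} ≥ … ≥ λ_n and D ∈ ℂ^{m×m} be Hermitian with eigenvalues μ_1 ≤ … ≤ μ_r ≤ 0 < μ_{r+1} ≤ … ≤ μ_m, with p = dim ker D. Let κ > 0 and assume r − p ≤ k and κ²λ_i + μ_i ≥ 0 for i = 1,…,r−p. For i = 1,…,r−p choose 0 < ε_i ≤ κ² with ε_iλ_i + μ_i ≥ 0, set ε_j = 0 for j = r−p+1,…,r, and define K := U E V* with U, V unitary satisfying A = U·diag(λ_1,…,λ_n)·U*, D = V·diag(μ_1,…,μ_m)·V*, and E ∈ ℂ^{n×m} having (i,i)-entry √ε_i for i ≤ r and zeros elsewhere. If ε_i ≠ α_i := (λ_i − μ_i)²/(4λ_i²) for all i = 1,…,r−p, then ℂ^{n+m} has a basis consisting of eigenvectors of S = [[A,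 −AK],[K*A, D]]; i.e., S is diagonalizable. -/
open scoped Matrix ComplexOrder

/-!
Conjugating by the unitary `diag(U, V)` turns `S` into `T = [[Λ, -ΛE], [EᴴΛ, M]]` with
`Λ = diag λ`, `M = diag μ`. Since `E` is rectangular diagonal, `T` only couples the coordinates
`inl i` and `inr i`, through the block `[[λᵢ, -λᵢ√εᵢ], [λᵢ√εᵢ, μᵢ]]`. This block is diagonal unless
`λᵢ√εᵢ ≠ 0`, which forces `i < r - p`; its discriminant `(λᵢ - μᵢ)² - 4εᵢλᵢ²` is then nonzero
because `εᵢ ≠ αᵢ`, so it has two distinct eigenvalues `t₁ ≠ t₂`. Every `v` in the span of the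
block satisfies `(f - t₁)(f - t₂) v = 0`, hence `v = ((f - t₂) v - (f - t₁) v) / (t₁ - t₂)` is a sum
of eigenvectors. So the eigenvectors of `T`, and hence those of `S`, span the whole space.
-/

open Polynomial in
theorem IsAlgClosed.exists_add_eq_and_mul_eq {K : Type*} [Field K] [IsAlgClosed K] (s q : K) :
    ∃ t₁ t₂ : K, t₁ + t₂ = s ∧ t₁ * t₂ = q := by
  obtain ⟨t, ht⟩ := IsAlgClosed.exists_root (C 1 * X ^ 2 + C (-s) * X + C q)
    (by rw [degree_quadratic one_ne_zero]; decide)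
  refine ⟨t, s - t, by ring, ?_⟩
  simp only [IsRoot, eval_add, eval_mul, eval_C, eval_pow, eval_X] at ht
  linear_combination -ht

theorem Real.mul_sqrt_eq_zero_or_sub_sq_sub_ne_zero {a b ε : ℝ}
    (h : ε ≠ (a - b) ^ 2 / (4 * a ^ 2)) :
    a * √ε = 0 ∨ (a - b) ^ 2 - 4 * (a * √ε) ^ 2 ≠ 0 := by
  by_contra! hc
  obtain ⟨hne, hdisc⟩ := hc
  have ha : a ≠ 0 := left_ne_zero_of_mul hne
  have hε : 0 ≤ ε := (Real.sqrt_ne_zero'.mp (right_ne_zero_of_mul hne)).le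
  rw [mul_pow, Real.sq_sqrt hε] at hdisc
  apply h
  field_simp
  linarith

namespace Module.End

variable {K V : Type*} [Field K] [AddCommGroup V] [Module K V] {f : End K V}

theorem mem_eigenspace_sup_of_quadratic {t₁ t₂ : K} (h : t₁ ≠ t₂) {v : V}
    (hv : f (f v) - (t₁ + t₂) • f v + (t₁ * t₂) • v = 0) :
    v ∈ eigenspace f t₁ ⊔ eigenspace f t₂ := by
  have h' : t₁ - t₂ ≠ 0 := sub_ne_zero.mpr h
  refine Submodule.mem_sup.mpr ⟨(t₁ - t₂)⁻¹ • (f v - t₂ • v), ?_,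
    -((t₁ - t₂)⁻¹ • (f v - t₁ • v)), ?_, ?_⟩
  · rw [mem_eigenspace_iff, map_smul, map_sub, map_smul]
    linear_combination (norm := module) (t₁ - t₂)⁻¹ • hv
  · rw [mem_eigenspace_iff, map_neg, map_smul, map_sub, map_smul]
    linear_combination (norm := module) -(t₁ - t₂)⁻¹ • hv
  · rw [← smul_neg, ← smul_add, inv_smul_eq_iff₀ h']
    module

theorem mem_iSup_eigenspace_of_apply_eq_smul {μ : K} {v : V} (hv : f v = μ • v) :
    v ∈ ⨆ μ, eigenspace f μ :=
  Submodule.mem_iSup_of_mem μ (mem_eigenspace_iff.mpr hv)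

theorem mem_iSup_eigenspace_pair_of_discr_ne_zero [IsAlgClosed K] {x y : V} {a b c d : K}
    (hx : f x = a • x + c • y) (hy : f y = b • x + d • y)
    (hdisc : (a - d) ^ 2 + 4 * b * c ≠ 0) :
    x ∈ ⨆ μ, eigenspace f μ ∧ y ∈ ⨆ μ, eigenspace f μ := by
  obtain ⟨t₁, t₂, hsum, hprod⟩ := IsAlgClosed.exists_add_eq_and_mul_eq (a + d) (a * d - b * c)
  have hne : t₁ ≠ t₂ := by
    rintro rfl
    apply hdisc
    linear_combination (-(a + d + 2 * t₁)) * hsum + 4 * hprod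
  constructor <;> refine sup_le (le_iSup (eigenspace f) t₁) (le_iSup (eigenspace f) t₂)
    (mem_eigenspace_sup_of_quadratic hne ?_)
  · rw [hsum, hprod, hx, map_add, map_smul, map_smul, hx, hy]
    module
  · rw [hsum, hprod, hy, map_add, map_smul, map_smul, hx, hy]
    module

theorem exists_basis_apply_eq_smul_of_iSup_eigenspace_eq_top {ι : Type*} (b₀ : Basis ι K V)
    (h : ⨆ μ, eigenspace f μ = ⊤) : ∃ b : Basis ι K V, ∀ i, ∃ μ : K, f (b i) = μ • b i := by
  have hspan : ⊤ ≤ Submodule.span K {v | ∃ μ : K, f v = μ • v} := by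
    rw [← h, Submodule.iSup_eq_span]
    exact Submodule.span_mono (Set.iUnion_subset fun μ v hv => ⟨μ, mem_eigenspace_iff.mp hv⟩)
  let b := Basis.ofSpan hspan
  refine ⟨b.reindex (b.indexEquiv b₀), fun i => ?_⟩
  rw [Basis.reindex_apply]
  exact Basis.ofSpan_subset hspan ⟨_, rfl⟩

end Module.End

open Module End

namespace Matrix

section Eigenbasis

variable {ι K : Type*} [Fintype ι] [DecidableEq ι] [Field K]

theorem iSup_eigenspace_toLin'_eq_top_of_mul_eq_mul {S T W : Matrix ι ι K} (hW : IsUnit W)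
    (hSW : S * W = W * T) (hT : ⨆ μ, eigenspace (toLin' T) μ = ⊤) :
    ⨆ μ, eigenspace (toLin' S) μ = ⊤ := by
  have hmap : Submodule.map (toLin' W) (⨆ μ, eigenspace (toLin' T) μ) ≤
      ⨆ μ, eigenspace (toLin' S) μ := by
    rw [Submodule.map_iSup]
    refine iSup_mono fun μ => Submodule.map_le_iff_le_comap.mpr fun x hx => ?_
    rw [Submodule.mem_comap, mem_eigenspace_iff, toLin'_apply, toLin'_apply, mulVec_mulVec, hSW,
      ← mulVec_mulVec, ← toLin'_apply T, mem_eigenspace_iff.mp hx, mulVec_smul]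
  rw [hT, Submodule.map_top, LinearMap.range_eq_top.mpr] at hmap
  · exact top_le_iff.mp hmap
  · exact mulVec_surjective_iff_isUnit.mpr hW

theorem exists_basis_mulVec_eq_smul_of_iSup_eigenspace_eq_top {S : Matrix ι ι K}
    (h : ⨆ μ, eigenspace (toLin' S) μ = ⊤) :
    ∃ (b : Basis ι K (ι → K)) (d : ι → K), ∀ i, S *ᵥ b i = d i • b i := by
  obtain ⟨b, hb⟩ := exists_basis_apply_eq_smul_of_iSup_eigenspace_eq_top (Pi.basisFun K ι) h
  choose d hd using hb
  exact ⟨b, d, hd⟩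

theorem exists_isUnit_eq_mul_diagonal_mul_inv_of_basis {S : Matrix ι ι K}
    (b : Basis ι K (ι → K)) {d : ι → K} (hb : ∀ i, S *ᵥ b i = d i • b i) :
    ∃ P : Matrix ι ι K, IsUnit P ∧ S = P * diagonal d * P⁻¹ := by
  let P := (Pi.basisFun K ι).toMatrix b
  have : Invertible P := (Pi.basisFun K ι).invertibleToMatrix b
  have hSP : S * P = P * diagonal d := by
    ext i j
    have := congr_fun (hb j) i
    simp only [mulVec, dotProduct, Pi.smul_apply, smul_eq_mul] at this
    rw [mul_diagonal, mul_apply]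
    simp only [P, Basis.toMatrix_apply, Pi.basisFun_repr]
    rw [this, mul_comm]
  refine ⟨P, isUnit_of_invertible P, ?_⟩
  rw [← hSP, mul_assoc, mul_inv_of_invertible, mul_one]

end Eigenbasis

section BlockDiagonal

variable {K : Type*} [Field K] {n m : ℕ} (a : Fin n → K) (d : Fin m → K)
  {B : Matrix (Fin n) (Fin m) K} {C : Matrix (Fin m) (Fin n) K}

theorem fromBlocks_diagonal_mulVec_single_inl
    (hC : ∀ (j : Fin m) (i : Fin n), (j : ℕ) ≠ i → C j i = 0) {i : Fin n} {j : Fin m}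
    (hij : (i : ℕ) = j) :
    fromBlocks (diagonal a) B C (diagonal d) *ᵥ Pi.single (Sum.inl i) 1 =
      a i • Pi.single (Sum.inl i) 1 + C j i • Pi.single (Sum.inr j) 1 := by
  ext (k | k)
  · rcases eq_or_ne k i with rfl | hk <;> simp [*]
  · rcases eq_or_ne k j with rfl | hk
    · simp
    · simp [hk, hC k i fun h => hk (Fin.ext (h.trans hij))]

theorem fromBlocks_diagonal_mulVec_single_inr
    (hB : ∀ (i : Fin n) (j : Fin m), (i : ℕ) ≠ j → B i j = 0) {i : Fin n} {j : Fin m}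
    (hij : (i : ℕ) = j) :
    fromBlocks (diagonal a) B C (diagonal d) *ᵥ Pi.single (Sum.inr j) 1 =
      B i j • Pi.single (Sum.inl i) 1 + d j • Pi.single (Sum.inr j) 1 := by
  ext (k | k)
  · rcases eq_or_ne k i with rfl | hk
    · simp
    · simp [hk, hB k j fun h => hk (Fin.ext (h.trans hij.symm))]
  · rcases eq_or_ne k j with rfl | hk <;> simp [*]

theorem fromBlocks_diagonal_mulVec_single_inl_of_le
    (hC : ∀ (j : Fin m) (i : Fin n), (j : ℕ) ≠ i → C j i = 0) {i : Fin n} (hi : m ≤ i) :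
    fromBlocks (diagonal a) B C (diagonal d) *ᵥ Pi.single (Sum.inl i) 1 =
      a i • Pi.single (Sum.inl i) 1 := by
  ext (k | k)
  · rcases eq_or_ne k i with rfl | hk <;> simp [*]
  · simp [hC k i (by omega)]

theorem fromBlocks_diagonal_mulVec_single_inr_of_le
    (hB : ∀ (i : Fin n) (j : Fin m), (i : ℕ) ≠ j → B i j = 0) {j : Fin m} (hj : n ≤ j) :
    fromBlocks (diagonal a) B C (diagonal d) *ᵥ Pi.single (Sum.inr j) 1 =
      d j • Pi.single (Sum.inr j) 1 := by
  ext (k | k)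
  · simp [hB k j (by omega)]
  · rcases eq_or_ne k j with rfl | hk <;> simp [*]

theorem iSup_eigenspace_toLin'_fromBlocks_diagonal_eq_top [IsAlgClosed K]
    (hB : ∀ (i : Fin n) (j : Fin m), (i : ℕ) ≠ j → B i j = 0)
    (hC : ∀ (j : Fin m) (i : Fin n), (j : ℕ) ≠ i → C j i = 0)
    (hblock : ∀ (i : Fin n) (j : Fin m), (i : ℕ) = j →
      (B i j = 0 ∧ C j i = 0) ∨ (a i - d j) ^ 2 + 4 * B i j * C j i ≠ 0) :
    ⨆ μ, eigenspace (toLin' (fromBlocks (diagonal a) B C (diagonal d))) μ = ⊤ := by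
  set f := toLin' (fromBlocks (diagonal a) B C (diagonal d))
  have hpair : ∀ (i : Fin n) (j : Fin m), (i : ℕ) = j →
      Pi.single (Sum.inl i) 1 ∈ ⨆ μ, eigenspace f μ ∧
        Pi.single (Sum.inr j) 1 ∈ ⨆ μ, eigenspace f μ := by
    intro i j hij
    have hx := fromBlocks_diagonal_mulVec_single_inl a d (B := B) hC hij
    have hy := fromBlocks_diagonal_mulVec_single_inr a d (C := C) hB hij
    rcases hblock i j hij with ⟨hB0, hC0⟩ | hdisc
    · rw [hC0, zero_smul, add_zero] at hx
      rw [hB0, zero_smul, zero_add] at hy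
      exact ⟨mem_iSup_eigenspace_of_apply_eq_smul hx, mem_iSup_eigenspace_of_apply_eq_smul hy⟩
    · exact mem_iSup_eigenspace_pair_of_discr_ne_zero hx hy hdisc
  refine (Submodule.eq_top_iff_forall_basis_mem (Pi.basisFun K _)).mpr ?_
  rintro (i | j) <;> rw [Pi.basisFun_apply]
  · by_cases hi : (i : ℕ) < m
    · exact (hpair i ⟨i, hi⟩ rfl).1
    · exact mem_iSup_eigenspace_of_apply_eq_smul
        (fromBlocks_diagonal_mulVec_single_inl_of_le a d (B := B) hC (not_lt.mp hi))
  · by_cases hj : (j : ℕ) < n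
    · exact (hpair ⟨j, hj⟩ j rfl).2
    · exact mem_iSup_eigenspace_of_apply_eq_smul
        (fromBlocks_diagonal_mulVec_single_inr_of_le a d (C := C) hB (not_lt.mp hj))

end BlockDiagonal

section Unitary

variable {l o R : Type*} [Fintype l] [Fintype o] [DecidableEq l] [DecidableEq o] [Ring R]
  [StarRing R]

theorem fromBlocks_mul_fromBlocks_eq_of_conjTranspose_mul_self {U : Matrix l l R}
    {V : Matrix o o R} (hU : Uᴴ * U = 1) (hV : Vᴴ * V = 1) (Λ : Matrix l l R) (M : Matrix o o R)
    (E : Matrix l o R) :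
    fromBlocks (U * Λ * Uᴴ) (-(U * Λ * Uᴴ * (U * E * Vᴴ))) ((U * E * Vᴴ)ᴴ * (U * Λ * Uᴴ))
        (V * M * Vᴴ) * fromBlocks U 0 0 V =
      fromBlocks U 0 0 V * fromBlocks Λ (-(Λ * E)) (Eᴴ * Λ) M := by
  simp only [fromBlocks_multiply, conjTranspose_mul, conjTranspose_conjTranspose, Matrix.mul_assoc,
    Matrix.mul_neg, Matrix.neg_mul, Matrix.mul_zero, Matrix.zero_mul, neg_zero, add_zero, zero_add]
  simp only [← Matrix.mul_assoc Uᴴ U, hU, hV, Matrix.one_mul, Matrix.mul_one]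

end Unitary

end Matrix

open Matrix in
theorem neg_diagonal_mul_apply_eq_zero_or_discr_ne_zero {n m r p : ℕ} {lam mu eps : ℕ → ℝ}
    {E : Matrix (Fin n) (Fin m) ℂ}
    (hE : ∀ (i : Fin n) (j : Fin m),
      E i j = if (i : ℕ) = j ∧ (j : ℕ) < r then (√(eps j) : ℂ) else 0)
    (hepsz : ∀ j : ℕ, r - p ≤ j → j < r → eps j = 0)
    (hne : ∀ i : ℕ, i < r - p → eps i ≠ (lam i - mu i) ^ 2 / (4 * lam i ^ 2))
    {i : Fin n} {j : Fin m} (hij : (i : ℕ) = j) :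
    ((-(diagonal (fun k : Fin n => (lam k : ℂ)) * E)) i j = 0 ∧
        (Eᴴ * diagonal (fun k : Fin n => (lam k : ℂ))) j i = 0) ∨
      ((lam i : ℂ) - mu j) ^ 2 + 4 * (-(diagonal (fun k : Fin n => (lam k : ℂ)) * E)) i j *
        (Eᴴ * diagonal (fun k : Fin n => (lam k : ℂ))) j i ≠ 0 := by
  simp only [Matrix.neg_apply, Matrix.diagonal_mul, mul_diagonal, conjTranspose_apply, hE, hij,
    true_and]
  by_cases hj : (j : ℕ) < r - p
  · rw [if_pos (hj.trans_le (Nat.sub_le r p)), Complex.star_def, Complex.conj_ofReal]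
    rcases Real.mul_sqrt_eq_zero_or_sub_sq_sub_ne_zero (hne j hj) with h0 | hdisc
    · have h0' : (lam j : ℂ) * √(eps j) = 0 := by exact_mod_cast h0
      exact Or.inl ⟨by rw [h0', neg_zero], by rw [mul_comm, h0']⟩
    · refine Or.inr fun h => hdisc ?_
      exact_mod_cast (by push_cast; linear_combination h :
        (((lam j - mu j) ^ 2 - 4 * (lam j * √(eps j)) ^ 2 : ℝ) : ℂ) = 0)
  · left
    split_ifs with hjr
    · simp [hepsz j (not_lt.mp hj) hjr]
    · simp

theorem diagonalizable_blockMatrix_semidef_general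
    (n m r p : ℕ)
    (lam mu eps : ℕ → ℝ)
    (D : Matrix (Fin m) (Fin m) ℂ)
    (hepsz : ∀ j : ℕ, r - p ≤ j → j < r → eps j = 0)
    (U : Matrix (Fin n) (Fin n) ℂ) (hU : U ∈ Matrix.unitaryGroup (Fin n) ℂ)
    (V : Matrix (Fin m) (Fin m) ℂ) (hV : V ∈ Matrix.unitaryGroup (Fin m) ℂ)
    (A : Matrix (Fin n) (Fin n) ℂ)
    (hA : A = U * Matrix.diagonal (fun i : Fin n => (lam i : ℂ)) * Uᴴ)
    (hD : D = V * Matrix.diagonal (fun j : Fin m => (mu j : ℂ)) * Vᴴ)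
    (E : Matrix (Fin n) (Fin m) ℂ)
    (hE : ∀ (i : Fin n) (j : Fin m),
      E i j = if (i : ℕ) = (j : ℕ) ∧ (j : ℕ) < r then (Real.sqrt (eps j) : ℂ) else 0)
    (K : Matrix (Fin n) (Fin m) ℂ) (hK : K = U * E * Vᴴ)
    (S : Matrix (Fin n ⊕ Fin m) (Fin n ⊕ Fin m) ℂ)
    (hS : S = Matrix.fromBlocks A (-(A * K)) (Kᴴ * A) D)
    (hne : ∀ i : ℕ, i < r - p → eps i ≠ (lam i - mu i) ^ 2 / (4 * lam i ^ 2)) :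
    (∃ b : Module.Basis (Fin n ⊕ Fin m) ℂ ((Fin n ⊕ Fin m) → ℂ),
      ∀ idx, ∃ c : ℂ, S.mulVec (b idx) = c • b idx) ∧
    (∃ (P : Matrix (Fin n ⊕ Fin m) (Fin n ⊕ Fin m) ℂ) (d : (Fin n ⊕ Fin m) → ℂ),
      IsUnit P ∧ S = P * Matrix.diagonal d * P⁻¹) := by
  set Λ := Matrix.diagonal (fun i : Fin n => (lam i : ℂ))
  have hSW : S * Matrix.fromBlocks U 0 0 V = Matrix.fromBlocks U 0 0 V *
      Matrix.fromBlocks Λ (-(Λ * E)) (Eᴴ * Λ) (Matrix.diagonal fun j : Fin m => (mu j : ℂ)) := by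
    subst hS hA hD hK
    exact Matrix.fromBlocks_mul_fromBlocks_eq_of_conjTranspose_mul_self
      (Matrix.mem_unitaryGroup_iff'.mp hU) (Matrix.mem_unitaryGroup_iff'.mp hV) _ _ _
  have hW : IsUnit (Matrix.fromBlocks U 0 0 V) :=
    Matrix.isUnit_fromBlocks_zero₂₁.mpr ⟨Unitary.isUnit_coe (U := ⟨U, hU⟩),
      Unitary.isUnit_coe (U := ⟨V, hV⟩)⟩
  have hT := Matrix.iSup_eigenspace_toLin'_fromBlocks_diagonal_eq_top
    (fun i : Fin n => (lam i : ℂ)) (fun j : Fin m => (mu j : ℂ)) (B := -(Λ * E)) (C := Eᴴ * Λ)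
    (fun i j hij => by simp [Λ, hE, hij])
    (fun j i hji => by simp [Λ, hE, Ne.symm hji])
    fun i j hij => neg_diagonal_mul_apply_eq_zero_or_discr_ne_zero hE hepsz hne hij
  obtain ⟨b, d, hb⟩ := Matrix.exists_basis_mulVec_eq_smul_of_iSup_eigenspace_eq_top
    (Matrix.iSup_eigenspace_toLin'_eq_top_of_mul_eq_mul hW hSW hT)
  obtain ⟨P, hP, hPd⟩ := Matrix.exists_isUnit_eq_mul_diagonal_mul_inv_of_basis b hb
  exact ⟨⟨b, fun i => ⟨d i, hb i⟩⟩, P, d, hP, hPd⟩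

/-- If in the construction of `S = [[A, −AK],[KᴴA, D]]` (positive semidefinite case) one has
`ε i ≠ α i = (lam i − mu i)²/(4(lam i)²)` for all `i < r − p`, then `ℂ^{n+m}` has a basis
consisting of eigenvectors of `S`, i.e. `S` is diagonalizable. -/
theorem diagonalizable_blockMatrix_semidef
    (n m k r p : ℕ) (hkn : k ≤ n) (hrm : r ≤ m) (hpr : p ≤ r)
    (κ : ℝ) (hκ : 0 < κ)
    (lam mu eps : ℕ → ℝ)
    (hlam : ∀ i j : ℕ, i ≤ j → j < n → lam j ≤ lam i)
    (hlampos : ∀ i : ℕ, i < k → 0 < lam i)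
    (hlamnonpos : ∀ i : ℕ, k ≤ i → i < n → lam i ≤ 0)
    (hmu : ∀ i j : ℕ, i ≤ j → j < m → mu i ≤ mu j)
    (hmunonpos : ∀ i : ℕ, i < r → mu i ≤ 0)
    (hmupos : ∀ i : ℕ, r ≤ i → i < m → 0 < mu i)
    (D : Matrix (Fin m) (Fin m) ℂ)
    (hp : p = Module.finrank ℂ (LinearMap.ker D.mulVecLin))
    (hrpk : r - p ≤ k)
    (hcond : ∀ i : ℕ, i < r - p → 0 ≤ κ ^ 2 * lam i + mu i)
    (heps0 : ∀ i : ℕ, i < r - p → 0 < eps i)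
    (hepsκ : ∀ i : ℕ, i < r - p → eps i ≤ κ ^ 2)
    (hepsc : ∀ i : ℕ, i < r - p → 0 ≤ eps i * lam i + mu i)
    (hepsz : ∀ j : ℕ, r - p ≤ j → j < r → eps j = 0)
    (U : Matrix (Fin n) (Fin n) ℂ) (hU : U ∈ Matrix.unitaryGroup (Fin n) ℂ)
    (V : Matrix (Fin m) (Fin m) ℂ) (hV : V ∈ Matrix.unitaryGroup (Fin m) ℂ)
    (A : Matrix (Fin n) (Fin n) ℂ)
    (hA : A = U * Matrix.diagonal (fun i : Fin n => (lam i : ℂ)) * Uᴴ)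
    (hD : D = V * Matrix.diagonal (fun j : Fin m => (mu j : ℂ)) * Vᴴ)
    (E : Matrix (Fin n) (Fin m) ℂ)
    (hE : ∀ (i : Fin n) (j : Fin m),
      E i j = if (i : ℕ) = (j : ℕ) ∧ (j : ℕ) < r then (Real.sqrt (eps j) : ℂ) else 0)
    (K : Matrix (Fin n) (Fin m) ℂ) (hK : K = U * E * Vᴴ)
    (S : Matrix (Fin n ⊕ Fin m) (Fin n ⊕ Fin m) ℂ)
    (hS : S = Matrix.fromBlocks A (-(A * K)) (Kᴴ * A) D)
    (hne : ∀ i : ℕ, i < r - p → eps i ≠ (lam i - mu i) ^ 2 / (4 * lam i ^ 2)) :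
    (∃ b : Module.Basis (Fin n ⊕ Fin m) ℂ ((Fin n ⊕ Fin m) → ℂ),
      ∀ idx, ∃ c : ℂ, S.mulVec (b idx) = c • b idx) ∧
    (∃ (P : Matrix (Fin n ⊕ Fin m) (Fin n ⊕ Fin m) ℂ) (d : (Fin n ⊕ Fin m) → ℂ),
      IsUnit P ∧ S = P * Matrix.diagonal d * P⁻¹) :=
  diagonalizable_blockMatrix_semidef_general n m r p lam mu eps D hepsz U hU V hV A hA hD E hE K hK
    S hS hne
end

section
/- Let A ∈ ℂ^{n×n} be Hermitian with eigenvalues λ_1 ≥ … ≥ λ_k > 0 ≥ λ_{k+1} ≥ … ≥ λ_n and D ∈ ℂ^{m×m} be Hermitian with eigenvalues μ_1 ≤ … ≤ μ_r ≤ 0 < μ_{r+1} ≤ … ≤ μ_m, with p = dim ker D. Let κ > 0 and assume r ≤ k and κ²λ_i + μ_i > 0 for i = 1,…,r−p. For i = 1,…,r−p choose 0 < ε_i < κ² with ε_iλ_i + μ_i > 0, for j = r−p+1,…,r choose arbitrary 0 ≤ ε_j < κ², and define K := U E V* with U, V unitary satisfying A = U·diag(λ_1,…,λ_n)·U*, D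 = V·diag(μ_1,…,μ_m)·V*, and E ∈ ℂ^{n×m} having (i,i)-entry √ε_i for i ≤ r and zeros elsewhere. If ε_i ≠ α_i := (λ_i − μ_i)²/(4λ_i²) for all i = 1,…,r, then ℂ^{n+m} has a basis consisting of eigenvectors of S = [[A, −AK],[K*A, D]]; i.e., S is diagonalizable. -/
/-!
Conjugating by the unitary `diag(U, V)` turns `S` into `[[Λ, -ΛE], [EᴴΛ, M]]` with `Λ`, `M`
diagonal and `E` rectangular diagonal. This matrix only couples coordinate `i` of the first block
with coordinate `i` of the second, so it is a direct sum of the `2 × 2` matrices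
`[[λᵢ, -βᵢ], [βᵢ, μᵢ]]`, `βᵢ = √εᵢ λᵢ`, and of `1 × 1` blocks. A block with `βᵢ ≠ 0` has
discriminant `(λᵢ - μᵢ)² - 4εᵢλᵢ²`, which vanishes exactly when `εᵢ = αᵢ`; so under the hypothesis
every block has two distinct eigenvalues or is already diagonal, and the diagonalizations of the
blocks assemble into one of `S`.
-/

open scoped Matrix

namespace Matrix

variable {R : Type*}

def IsDiagonalizable {ι : Type*} [Fintype ι] [DecidableEq ι] [Semiring R]
    (M : Matrix ι ι R) : Prop :=
  ∃ (P P' : Matrix ι ι R) (d : ι → R), P * P' = 1 ∧ M * P = P * diagonal d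

/-- Indexing the diagonal by `ℕ` lets one function describe the diagonals of all sizes at once. -/
def rectDiag [Zero R] (a b : ℕ) (f : ℕ → R) : Matrix (Fin a) (Fin b) R :=
  of fun i j => if (i : ℕ) = j then f i else 0

section rectDiag

variable [Semiring R] {a b c : ℕ}

theorem rectDiag_mul (f g : ℕ → R) :
    rectDiag a b f * rectDiag b c g = rectDiag a c fun i => if i < b then f i * g i else 0 := by
  ext i j
  simp only [rectDiag, mul_apply, of_apply]
  by_cases hib : (i : ℕ) < b
  · rw [Finset.sum_eq_single ⟨i, hib⟩ (fun k _ hk => by grind) (by simp)]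
    by_cases hij : (i : ℕ) = j
    · simp [← hij, hib]
    · simp [hij]
  · rw [Finset.sum_eq_zero fun k _ => by grind]
    simp [hib]

theorem rectDiag_add (f g : ℕ → R) :
    rectDiag a b f + rectDiag a b g = rectDiag a b fun i => f i + g i := by
  ext i j
  by_cases h : (i : ℕ) = j <;> simp [rectDiag, h]

theorem rectDiag_congr {f g : ℕ → R} (h : ∀ i < a, i < b → f i = g i) :
    rectDiag a b f = rectDiag a b g := by
  ext i j
  by_cases hij : (i : ℕ) = j
  · simp [rectDiag, hij, h j (hij ▸ i.isLt) j.isLt]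
  · simp [rectDiag, hij]

end rectDiag

/-- The matrix acting on each pair of coordinates `(inl i, inr i)` by the `2 × 2` matrix `F i`
(on `inl i` alone by `F i 0 0` when `m ≤ i`, on `inr i` alone by `F i 1 1` when `n ≤ i`). -/
def pairBlocks [Zero R] (n m : ℕ) (F : ℕ → Matrix (Fin 2) (Fin 2) R) :
    Matrix (Fin n ⊕ Fin m) (Fin n ⊕ Fin m) R :=
  fromBlocks (rectDiag n n fun i => F i 0 0) (rectDiag n m fun i => F i 0 1)
    (rectDiag m n fun i => F i 1 0) (rectDiag m m fun i => F i 1 1)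

section pairBlocks

variable [Semiring R] {n m : ℕ}

/-- `pairBlocks` forgets the off-diagonal entries of the blocks `F i` with `n ≤ i ∨ m ≤ i`,
so these must vanish for the blockwise product rule. -/
theorem pairBlocks_mul (F G : ℕ → Matrix (Fin 2) (Fin 2) R)
    (hF : ∀ i, n ≤ i ∨ m ≤ i → (F i).IsDiag) :
    pairBlocks n m F * pairBlocks n m G = pairBlocks n m fun i => F i * G i := by
  simp only [pairBlocks, fromBlocks_multiply, rectDiag_mul, rectDiag_add]
  congr 1 <;> apply rectDiag_congr <;> intro i hi hi' <;>
    simp only [mul_apply, Fin.sum_univ_two, hi, hi', if_true]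
  all_goals
    split_ifs
    · rfl
    · simp [hF i (by omega) (show (0 : Fin 2) ≠ 1 by decide),
        hF i (by omega) (show (1 : Fin 2) ≠ 0 by decide)]

theorem pairBlocks_one : pairBlocks n m (fun _ => (1 : Matrix (Fin 2) (Fin 2) R)) = 1 := by
  ext (i | i) (j | j) <;> simp [pairBlocks, rectDiag, one_apply, Fin.ext_iff]

theorem pairBlocks_diagonal (d : ℕ → Fin 2 → R) :
    pairBlocks n m (fun i => diagonal (d i)) =
      diagonal (Sum.elim (fun i : Fin n => d i 0) fun j : Fin m => d j 1) := by
  ext (i | i) (j | j) <;> simp [pairBlocks, rectDiag, diagonal_apply, Fin.ext_iff]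

theorem isDiagonalizable_pairBlocks (F : ℕ → Matrix (Fin 2) (Fin 2) R)
    (hF : ∀ i, n ≤ i ∨ m ≤ i → (F i).IsDiag)
    (hdiag : ∀ i, ¬(F i).IsDiag → (F i).IsDiagonalizable) :
    (pairBlocks n m F).IsDiagonalizable := by
  -- Diagonal blocks are diagonalized by `1`, so the conjugator again satisfies `pairBlocks_mul`.
  have hblock : ∀ i, ∃ (P P' : Matrix (Fin 2) (Fin 2) R) (d : Fin 2 → R),
      P * P' = 1 ∧ F i * P = P * diagonal d ∧ ((F i).IsDiag → P = 1) := by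
    intro i
    by_cases hi : (F i).IsDiag
    · exact ⟨1, 1, (F i).diag, mul_one 1, by rw [mul_one, one_mul, hi.diagonal_diag],
        fun _ => rfl⟩
    · obtain ⟨P, P', d, hPP', hFP⟩ := hdiag i hi
      exact ⟨P, P', d, hPP', hFP, fun h => absurd h hi⟩
  choose P P' d hPP' hFP hP using hblock
  have hPdiag : ∀ i, n ≤ i ∨ m ≤ i → (P i).IsDiag := fun i hi => hP i (hF i hi) ▸ isDiag_one
  refine ⟨pairBlocks n m P, pairBlocks n m P',
    Sum.elim (fun i : Fin n => d i 0) fun j : Fin m => d j 1, ?_, ?_⟩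
  · rw [pairBlocks_mul _ _ hPdiag]
    simp only [hPP', pairBlocks_one]
  · rw [← pairBlocks_diagonal, pairBlocks_mul _ _ hF, pairBlocks_mul _ _ hPdiag]
    simp only [hFP]

end pairBlocks

theorem IsDiagonalizable.conj {ι : Type*} [Fintype ι] [DecidableEq ι] [Semiring R]
    {T : Matrix ι ι R} (hT : T.IsDiagonalizable) {Q Q' : Matrix ι ι R}
    (hQQ' : Q * Q' = 1) (hQ'Q : Q' * Q = 1) : (Q * T * Q').IsDiagonalizable := by
  obtain ⟨P, P', d, hPP', hTP⟩ := hT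
  refine ⟨Q * P, P' * Q', d, ?_, ?_⟩
  · rw [Matrix.mul_assoc, ← Matrix.mul_assoc P, hPP', Matrix.one_mul, hQQ']
  · rw [Matrix.mul_assoc, ← Matrix.mul_assoc Q' Q, hQ'Q, Matrix.one_mul, Matrix.mul_assoc,
      hTP, ← Matrix.mul_assoc]

section CommRing

variable {ι : Type*} [Fintype ι] [DecidableEq ι] [CommRing R] {S : Matrix ι ι R}

theorem IsDiagonalizable.exists_basis_mulVec_eq_smul (hS : S.IsDiagonalizable) :
    ∃ b : Module.Basis ι R (ι → R), ∀ i, ∃ c : R, S *ᵥ b i = c • b i := by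
  obtain ⟨P, P', d, hPP', hSP⟩ := hS
  have : Invertible P := invertibleOfRightInverse P P' hPP'
  refine ⟨(Pi.basisFun R ι).map (P.toLinearEquiv' this), fun i => ⟨d i, ?_⟩⟩
  have hb : (Pi.basisFun R ι).map (P.toLinearEquiv' this) i = P *ᵥ Pi.single i 1 := by
    simp only [Module.Basis.map_apply, Pi.basisFun_apply]
    rfl
  rw [hb, mulVec_mulVec, hSP, ← mulVec_mulVec, diagonal_mulVec_single,
    ← mulVec_smul, ← Pi.single_smul', smul_eq_mul]

theorem IsDiagonalizable.exists_eq_mul_diagonal_mul_inv (hS : S.IsDiagonalizable) :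
    ∃ (P : Matrix ι ι R) (d : ι → R), IsUnit P ∧ S = P * diagonal d * P⁻¹ := by
  obtain ⟨P, P', d, hPP', hSP⟩ := hS
  have : Invertible P := invertibleOfRightInverse P P' hPP'
  exact ⟨P, d, isUnit_of_invertible P, by rw [← hSP, mul_inv_cancel_right_of_invertible]⟩

end CommRing

/-- The eigenvectors are `(s, b)` and `(b, s)` with `s = (x - y + δ) / 2`, `δ` a square root of
the discriminant; the sign of `δ` is chosen so that `s ≠ 0`, which makes `det = s δ ≠ 0`. -/
theorem isDiagonalizable_fin_two {K : Type*} [Field K] [IsAlgClosed K] [NeZero (2 : K)]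
    {x y b : K} (h : (x - y) ^ 2 ≠ 4 * b ^ 2) : !![x, -b; b, y].IsDiagonalizable := by
  obtain ⟨δ₀, hδ₀⟩ := IsAlgClosed.exists_pow_nat_eq ((x - y) ^ 2 - 4 * b ^ 2) two_pos
  have hδ₀0 : δ₀ ≠ 0 := by rintro rfl; exact h (by linear_combination -hδ₀)
  obtain ⟨δ, hδ, hδ0, hs⟩ : ∃ δ : K, δ ^ 2 = (x - y) ^ 2 - 4 * b ^ 2 ∧ δ ≠ 0 ∧ x - y + δ ≠ 0 := by
    by_cases hx : x - y + δ₀ = 0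
    · refine ⟨-δ₀, by rw [neg_sq, hδ₀], neg_ne_zero.mpr hδ₀0, ?_⟩
      rw [show x - y + -δ₀ = -2 * δ₀ by linear_combination hx]
      exact mul_ne_zero (neg_ne_zero.mpr two_ne_zero) hδ₀0
    · exact ⟨δ₀, hδ₀, hδ₀0, hx⟩
  set s := (x - y + δ) / 2 with hs_def
  have hquad : s ^ 2 - (x - y) * s + b ^ 2 = 0 := by
    rw [hs_def]; field_simp; linear_combination hδ
  have hdet : (!![s, b; b, s]).det = s * δ := by
    rw [det_fin_two_of, hs_def]; field_simp; linear_combination -hδ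
  refine ⟨!![s, b; b, s], !![s, b; b, s]⁻¹, ![y + s, x - s], mul_nonsing_inv _ ?_, ?_⟩
  · rw [hdet, isUnit_iff_ne_zero]
    exact mul_ne_zero (div_ne_zero hs two_ne_zero) hδ0
  · rw [diagonal_fin_two, mul_fin_two, mul_fin_two]
    ext i j
    fin_cases i <;> fin_cases j <;> simp
    · linear_combination -hquad
    · ring
    · ring
    · linear_combination hquad

theorem isDiagonalizable_pairBlocks_fin_two {K : Type*} [Field K] [IsAlgClosed K]
    [NeZero (2 : K)] {n m : ℕ} (x y b : ℕ → K) (hb : ∀ i, n ≤ i ∨ m ≤ i → b i = 0)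
    (hdisc : ∀ i, b i ≠ 0 → (x i - y i) ^ 2 ≠ 4 * b i ^ 2) :
    (pairBlocks n m fun i => !![x i, -b i; b i, y i]).IsDiagonalizable := by
  have hdiag : ∀ i, b i = 0 → (!![x i, -b i; b i, y i]).IsDiag := by
    intro i h p q hpq
    fin_cases p <;> fin_cases q <;> simp_all
  exact isDiagonalizable_pairBlocks _ (fun i hi => hdiag i (hb i hi))
    fun i hi => isDiagonalizable_fin_two (hdisc i fun h => hi (hdiag i h))

theorem fromBlocks_mem_unitaryGroup {l o : Type*} [Fintype l] [Fintype o] [DecidableEq l]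
    [DecidableEq o] [CommRing R] [StarRing R] {U : Matrix l l R} {V : Matrix o o R}
    (hU : U ∈ unitaryGroup l R) (hV : V ∈ unitaryGroup o R) :
    fromBlocks U 0 0 V ∈ unitaryGroup (l ⊕ o) R := by
  rw [mem_unitaryGroup_iff, star_eq_conjTranspose] at hU hV ⊢
  simp [fromBlocks_conjTranspose, fromBlocks_multiply, hU, hV]

theorem fromBlocks_eq_conj_fromBlocks {l o : Type*} [Fintype l] [Fintype o] [DecidableEq l]
    [DecidableEq o] [CommRing R] [StarRing R] (U Λ : Matrix l l R) (V M : Matrix o o R)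
    (E : Matrix l o R) (hU : Uᴴ * U = 1) :
    fromBlocks (U * Λ * Uᴴ) (-(U * Λ * Uᴴ * (U * E * Vᴴ))) ((U * E * Vᴴ)ᴴ * (U * Λ * Uᴴ))
        (V * M * Vᴴ) =
      fromBlocks U 0 0 V * fromBlocks Λ (-(Λ * E)) (Eᴴ * Λ) M * (fromBlocks U 0 0 V)ᴴ := by
  simp only [fromBlocks_conjTranspose, fromBlocks_multiply, conjTranspose_mul, Matrix.mul_assoc]
  simp only [← Matrix.mul_assoc Uᴴ U, hU, Matrix.one_mul, Matrix.mul_zero, Matrix.zero_mul,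
    add_zero, zero_add, conjTranspose_zero, Matrix.mul_neg, Matrix.neg_mul]
  simp [Matrix.mul_assoc]

theorem fromBlocks_diagonal_eq_pairBlocks {n m : ℕ} (lam mu e : ℕ → ℝ)
    (E : Matrix (Fin n) (Fin m) ℂ) (hE : ∀ i j, E i j = if (i : ℕ) = j then (e j : ℂ) else 0) :
    fromBlocks (diagonal fun i : Fin n => (lam i : ℂ))
        (-(diagonal (fun i : Fin n => (lam i : ℂ)) * E))
        (Eᴴ * diagonal fun i : Fin n => (lam i : ℂ)) (diagonal fun j : Fin m => (mu j : ℂ)) =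
      pairBlocks n m fun i => !![(lam i : ℂ), -(e i * lam i); e i * lam i, (mu i : ℂ)] := by
  ext (i | i) (j | j) <;>
    simp [pairBlocks, rectDiag, diagonal_apply, Fin.ext_iff, hE, mul_comm]
  all_goals by_cases hij : (i : ℕ) = j <;> simp [hij, eq_comm]

end Matrix

theorem sq_sub_ne_four_mul_sq_sqrt_mul {l u ε : ℝ} (hl : l ≠ 0) (hε : 0 ≤ ε)
    (hne : ε ≠ (l - u) ^ 2 / (4 * l ^ 2)) : (l - u) ^ 2 ≠ 4 * (√ε * l) ^ 2 := by
  intro h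
  apply hne
  rw [eq_div_iff (by positivity), h, mul_pow, Real.sq_sqrt hε]
  ring

theorem diagonalizable_blockMatrix_posdef_general
    (n m k r : ℕ) (hkn : k ≤ n) (hrm : r ≤ m)
    (lam mu eps : ℕ → ℝ)
    (D : Matrix (Fin m) (Fin m) ℂ)
    (hrk : r ≤ k)
    (U : Matrix (Fin n) (Fin n) ℂ) (hU : U ∈ Matrix.unitaryGroup (Fin n) ℂ)
    (V : Matrix (Fin m) (Fin m) ℂ) (hV : V ∈ Matrix.unitaryGroup (Fin m) ℂ)
    (A : Matrix (Fin n) (Fin n) ℂ)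
    (hA : A = U * Matrix.diagonal (fun i : Fin n => (lam i : ℂ)) * Uᴴ)
    (hD : D = V * Matrix.diagonal (fun j : Fin m => (mu j : ℂ)) * Vᴴ)
    (E : Matrix (Fin n) (Fin m) ℂ)
    (hE : ∀ (i : Fin n) (j : Fin m),
      E i j = if (i : ℕ) = (j : ℕ) ∧ (j : ℕ) < r then (Real.sqrt (eps j) : ℂ) else 0)
    (K : Matrix (Fin n) (Fin m) ℂ) (hK : K = U * E * Vᴴ)
    (S : Matrix (Fin n ⊕ Fin m) (Fin n ⊕ Fin m) ℂ)
    (hS : S = Matrix.fromBlocks A (-(A * K)) (Kᴴ * A) D)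
    (hne : ∀ i : ℕ, i < r → eps i ≠ (lam i - mu i) ^ 2 / (4 * lam i ^ 2)) :
    (∃ b : Module.Basis (Fin n ⊕ Fin m) ℂ ((Fin n ⊕ Fin m) → ℂ),
      ∀ idx, ∃ c : ℂ, S.mulVec (b idx) = c • b idx) ∧
    (∃ (P : Matrix (Fin n ⊕ Fin m) (Fin n ⊕ Fin m) ℂ) (d : (Fin n ⊕ Fin m) → ℂ),
      IsUnit P ∧ S = P * Matrix.diagonal d * P⁻¹) := by
  set e : ℕ → ℝ := fun j => if j < r then √(eps j) else 0
  have hE' : ∀ i j, E i j = if (i : ℕ) = j then (e j : ℂ) else 0 := fun i j => by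
    rw [hE]; by_cases hij : (i : ℕ) = j <;> by_cases hj : (j : ℕ) < r <;> simp [e, hij, hj]
  have hT := Matrix.isDiagonalizable_pairBlocks_fin_two (n := n) (m := m)
    (fun i => (lam i : ℂ)) (fun i => (mu i : ℂ)) (fun i => (e i : ℂ) * lam i)
    (fun i hi => by simp [e, show ¬i < r by omega])
    (fun i hb => by
      have hir : i < r := by by_contra h; simp [e, h] at hb
      simp only [e, if_pos hir, ne_eq, mul_eq_zero, Complex.ofReal_eq_zero, not_or] at hb ⊢
      exact_mod_cast sq_sub_ne_four_mul_sq_sqrt_mul hb.2 (Real.sqrt_ne_zero'.mp hb.1).le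
        (hne i hir))
  have hS' : S.IsDiagonalizable := by
    have hQ := Matrix.fromBlocks_mem_unitaryGroup hU hV
    rw [hS, hA, hD, hK, Matrix.fromBlocks_eq_conj_fromBlocks _ _ _ _ _
      (Unitary.star_mul_self_of_mem hU), Matrix.fromBlocks_diagonal_eq_pairBlocks lam mu e E hE']
    exact hT.conj (Unitary.mul_star_self_of_mem hQ) (Unitary.star_mul_self_of_mem hQ)
  exact ⟨hS'.exists_basis_mulVec_eq_smul, hS'.exists_eq_mul_diagonal_mul_inv⟩

/-- If in the construction of `S = [[A, −AK],[KᴴA, D]]` (positive definite case) one has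
`ε i ≠ α i = (lam i − mu i)²/(4(lam i)²)` for all `i < r`, then `ℂ^{n+m}` has a basis
consisting of eigenvectors of `S`, i.e. `S` is diagonalizable. -/
theorem diagonalizable_blockMatrix_posdef
    (n m k r p : ℕ) (hkn : k ≤ n) (hrm : r ≤ m) (hpr : p ≤ r)
    (κ : ℝ) (hκ : 0 < κ)
    (lam mu eps : ℕ → ℝ)
    (hlam : ∀ i j : ℕ, i ≤ j → j < n → lam j ≤ lam i)
    (hlampos : ∀ i : ℕ, i < k → 0 < lam i)
    (hlamnonpos : ∀ i : ℕ, k ≤ i → i < n → lam i ≤ 0)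
    (hmu : ∀ i j : ℕ, i ≤ j → j < m → mu i ≤ mu j)
    (hmunonpos : ∀ i : ℕ, i < r → mu i ≤ 0)
    (hmupos : ∀ i : ℕ, r ≤ i → i < m → 0 < mu i)
    (D : Matrix (Fin m) (Fin m) ℂ)
    (hp : p = Module.finrank ℂ (LinearMap.ker D.mulVecLin))
    (hrk : r ≤ k)
    (hcond : ∀ i : ℕ, i < r - p → 0 < κ ^ 2 * lam i + mu i)
    (heps0 : ∀ i : ℕ, i < r - p → 0 < eps i)
    (hepsκ : ∀ i : ℕ, i < r - p → eps i < κ ^ 2)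
    (hepsc : ∀ i : ℕ, i < r - p → 0 < eps i * lam i + mu i)
    (hepsz : ∀ j : ℕ, r - p ≤ j → j < r → 0 ≤ eps j ∧ eps j < κ ^ 2)
    (U : Matrix (Fin n) (Fin n) ℂ) (hU : U ∈ Matrix.unitaryGroup (Fin n) ℂ)
    (V : Matrix (Fin m) (Fin m) ℂ) (hV : V ∈ Matrix.unitaryGroup (Fin m) ℂ)
    (A : Matrix (Fin n) (Fin n) ℂ)
    (hA : A = U * Matrix.diagonal (fun i : Fin n => (lam i : ℂ)) * Uᴴ)
    (hD : D = V * Matrix.diagonal (fun j : Fin m => (mu j : ℂ)) * Vᴴ)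
    (E : Matrix (Fin n) (Fin m) ℂ)
    (hE : ∀ (i : Fin n) (j : Fin m),
      E i j = if (i : ℕ) = (j : ℕ) ∧ (j : ℕ) < r then (Real.sqrt (eps j) : ℂ) else 0)
    (K : Matrix (Fin n) (Fin m) ℂ) (hK : K = U * E * Vᴴ)
    (S : Matrix (Fin n ⊕ Fin m) (Fin n ⊕ Fin m) ℂ)
    (hS : S = Matrix.fromBlocks A (-(A * K)) (Kᴴ * A) D)
    (hne : ∀ i : ℕ, i < r → eps i ≠ (lam i - mu i) ^ 2 / (4 * lam i ^ 2)) :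
    (∃ b : Module.Basis (Fin n ⊕ Fin m) ℂ ((Fin n ⊕ Fin m) → ℂ),
      ∀ idx, ∃ c : ℂ, S.mulVec (b idx) = c • b idx) ∧
    (∃ (P : Matrix (Fin n ⊕ Fin m) (Fin n ⊕ Fin m) ℂ) (d : (Fin n ⊕ Fin m) → ℂ),
      IsUnit P ∧ S = P * Matrix.diagonal d * P⁻¹) :=
  diagonalizable_blockMatrix_posdef_general n m k r hkn hrm lam mu eps D hrk U hU V hV A hA hD E hE
    K hK S hS hne
end
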